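/- arXiv:1206.2212 — 9 statements merged into one kernel-verified Lean document; each statement's English description precedes it below -/
import Mathlib

section
/- Let γ > 0 and let φ : ℝ → ℝ be a nonnegative Schwartz function, not identically zero, such that its Fourier transform φ̂ is even and supported in [−1,1]. Then the constant C := (∫₀^∞ s^{2/γ−1} φ(s) ds)^{−1} is well defined and strictly positive, and the family W_t(λ) := C·φ(λ^{γ/2} t) (for t > 0) satisfies: (i) for every λ > 0, ∫₀^∞ t^{2/γ−1} W_t(λ) dt = λ^{−1}; (ii) W_t(λ) ≥ 0 for all λ ≥ 0 and t > 0; (iii) for every integer l ≥ 0 there is a constant C_l > 0 such that (1 + t^{2/γ} λ)^l · W_t(λ) ≤ C_l for all λ ≥ 0 and t > 0. -/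
open MeasureTheory Real

/-- The Fourier transform with the convention `φ̂(k) = (2π)⁻¹ ∫ φ(x) e^{−i k x} dx`. -/
noncomputable def fourierHat (f : ℝ → ℝ) (k : ℝ) : ℂ :=
  (2 * Real.pi : ℂ)⁻¹ * ∫ x : ℝ, (f x : ℂ) * Complex.exp (-(Complex.I * k * x))

/-! Evenness of `φ̂` makes `φ` even (Fourier inversion kills `φ(-·) - φ`), so the nonnegative,
nonzero `φ` is positive somewhere on `(0, ∞)` and the Mellin-type integral defining `C⁻¹` is
positive; it converges since `φ` is bounded near `0` and rapidly decreasing at `∞`.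
Property (i) is the substitution `s = λ^{γ/2} t`, and (iii) follows from
`t^{2/γ} λ = (λ^{γ/2} t)^{2/γ}` and the Schwartz decay of `φ`. -/

open Set Filter Topology FourierTransform

section Fourier

variable {V E : Type*} [NormedAddCommGroup V] [InnerProductSpace ℝ V] [MeasurableSpace V]
  [BorelSpace V] [FiniteDimensional ℝ V] [NormedAddCommGroup E] [NormedSpace ℂ E]

theorem Continuous.eq_zero_of_fourier_eq_zero [CompleteSpace E] {f : V → E} (hc : Continuous f)
    (hf : Integrable f) (h : 𝓕 f = 0) : f = 0 := by
  have h_inv := hc.fourierInv_fourier_eq hf (by rw [h]; exact integrable_zero _ _ _)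
  rw [h] at h_inv
  rw [← h_inv]
  ext w
  simp [Real.fourierInv_eq]

theorem fourier_comp_neg_eq_fourier_of_even {f : V → E}
    (h : ∀ w, 𝓕 f (-w) = 𝓕 f w) : 𝓕 (fun x ↦ f (-x)) = 𝓕 f := by
  ext w
  rw [← Real.fourierInv_eq_fourier_comp_neg, Real.fourierInv_eq_fourier_neg, h]

theorem Continuous.even_of_fourier_even [CompleteSpace E] {f : V → E} (hc : Continuous f)
    (hf : Integrable f) (h : ∀ w, 𝓕 f (-w) = 𝓕 f w) (x : V) : f (-x) = f x := by
  have hsub : 𝓕 (fun x ↦ f (-x) - f x) = 0 := by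
    ext w
    simp only [Real.fourier_eq, smul_sub]
    rw [integral_sub ((Real.fourierIntegral_convergent_iff w).2 hf.comp_neg)
      ((Real.fourierIntegral_convergent_iff w).2 hf), ← Real.fourier_eq, ← Real.fourier_eq,
      fourier_comp_neg_eq_fourier_of_even h, sub_self, Pi.zero_apply]
  have := (hc.comp continuous_neg).sub hc |>.eq_zero_of_fourier_eq_zero
    (hf.comp_neg.sub hf) hsub
  exact sub_eq_zero.1 (congrFun this x)

end Fourier

theorem fourierHat_two_pi_mul (f : ℝ → ℝ) (w : ℝ) :
    fourierHat f (2 * π * w) = (2 * π : ℂ)⁻¹ * 𝓕 (fun x ↦ (f x : ℂ)) w := by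
  rw [fourierHat, Real.fourier_real_eq_integral_exp_smul]
  congr 2 with x
  rw [smul_eq_mul, mul_comm]
  push_cast
  ring_nf

theorem even_of_fourierHat_even (φ : SchwartzMap ℝ ℝ)
    (h : ∀ k, fourierHat (fun x ↦ φ x) (-k) = fourierHat (fun x ↦ φ x) k) (x : ℝ) :
    φ (-x) = φ x := by
  have hF : ∀ w, 𝓕 (fun x ↦ (φ x : ℂ)) (-w) = 𝓕 (fun x ↦ (φ x : ℂ)) w := by
    intro w
    have := h (2 * π * w)
    rw [← mul_neg, fourierHat_two_pi_mul, fourierHat_two_pi_mul] at this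
    exact mul_left_cancel₀ (by simp [pi_ne_zero]) this
  exact_mod_cast (Complex.continuous_ofReal.comp φ.continuous).even_of_fourier_even
    (f := fun x ↦ (φ x : ℂ)) φ.integrable.ofReal hF x

theorem setIntegral_pos_of_continuousOn {α : Type*} [TopologicalSpace α] [MeasurableSpace α]
    [OpensMeasurableSpace α] {μ : Measure α} [μ.IsOpenPosMeasure] {f : α → ℝ} {s : Set α}
    (hs : IsOpen s) (hfc : ContinuousOn f s) (hfi : IntegrableOn f s μ)
    (hf_nonneg : ∀ x ∈ s, 0 ≤ f x) {x : α} (hx : x ∈ s) (hfx : f x ≠ 0) :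
    0 < ∫ x in s, f x ∂μ := by
  rw [setIntegral_pos_iff_support_of_nonneg_ae
    ((ae_restrict_iff' hs.measurableSet).2 (ae_of_all _ hf_nonneg)) hfi]
  have hopen : IsOpen (Function.support f ∩ s) := by
    rw [inter_comm]
    exact hfc.isOpen_inter_preimage hs isOpen_compl_singleton
  exact hopen.measure_pos μ ⟨x, hfx, hx⟩

theorem exists_pos_ne_zero_of_even {f : ℝ → ℝ} (hc : Continuous f) (heven : ∀ x, f (-x) = f x)
    {x : ℝ} (hx : f x ≠ 0) : ∃ y, 0 < y ∧ f y ≠ 0 := by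
  have habs : f |x| ≠ 0 := by
    rcases abs_choice x with h | h <;> rw [h] <;> simpa [heven] using hx
  obtain ⟨y, hy_supp, hy_gt⟩ :=
    ((eventually_nhdsWithin_of_eventually_nhds (hc.isOpen_support.eventually_mem habs)).and
      self_mem_nhdsWithin : ∀ᶠ y in 𝓝[>] |x|, f y ≠ 0 ∧ |x| < y).exists
  exact ⟨y, (abs_nonneg x).trans_lt hy_gt, hy_supp⟩

theorem SchwartzMap.integrableOn_rpow_mul_Ioi (φ : SchwartzMap ℝ ℝ) {s : ℝ} (hs : 0 < s) :
    IntegrableOn (fun t ↦ t ^ (s - 1) * φ t) (Ioi 0) := by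
  have h_top : (fun t ↦ φ t) =O[atTop] (· ^ (-(s + 1))) := by
    refine ((φ.isBigO_cocompact_rpow (-(s + 1))).mono atTop_le_cocompact).congr' (by rfl) ?_
    filter_upwards [eventually_ge_atTop 0] with t ht
    rw [Real.norm_of_nonneg ht]
  have h_bot : (fun t ↦ φ t) =O[𝓝[>] 0] (· ^ (-(0 : ℝ))) := by
    simpa using (φ.continuous.tendsto 0).mono_left nhdsWithin_le_nhds |>.isBigO_one ℝ
  exact mellin_convergent_of_isBigO_scalar
    (φ.continuous.locallyIntegrable.locallyIntegrableOn _) h_top (lt_add_one s) h_bot hs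

theorem integral_Ioi_rpow_mul_comp_mul (f : ℝ → ℝ) (s : ℝ) {c : ℝ} (hc : 0 < c) :
    ∫ t in Ioi 0, t ^ (s - 1) * f (c * t) = c ^ (-s) * ∫ t in Ioi 0, t ^ (s - 1) * f t := by
  have h_scale : ∀ t ∈ Ioi (0 : ℝ),
      t ^ (s - 1) * f (c * t) = c ^ (1 - s) * ((c * t) ^ (s - 1) * f (c * t)) := by
    intro t ht
    rw [Real.mul_rpow hc.le (le_of_lt ht), ← mul_assoc, ← mul_assoc, ← Real.rpow_add hc]
    simp
  rw [setIntegral_congr_fun measurableSet_Ioi h_scale, integral_const_mul,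
    integral_comp_mul_left_Ioi (fun u ↦ u ^ (s - 1) * f u) 0 hc, mul_zero, smul_eq_mul,
    ← mul_assoc, ← Real.rpow_neg_one, ← Real.rpow_add hc]
  ring_nf

theorem one_add_rpow_le_two_mul_one_add_pow_ceil {u p : ℝ} (hu : 0 ≤ u) (hp : 0 ≤ p) :
    1 + u ^ p ≤ 2 * (1 + u) ^ ⌈p⌉₊ := by
  have h_one : 1 ≤ (1 + u) ^ ⌈p⌉₊ := one_le_pow₀ (by linarith)
  have h_pow : u ^ p ≤ (1 + u) ^ ⌈p⌉₊ :=
    calc u ^ p ≤ (1 + u) ^ p := Real.rpow_le_rpow hu (by linarith) hp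
      _ ≤ (1 + u) ^ (⌈p⌉₊ : ℝ) :=
        Real.rpow_le_rpow_of_exponent_le (by linarith) (Nat.le_ceil p)
      _ = (1 + u) ^ ⌈p⌉₊ := Real.rpow_natCast _ _
  linarith

theorem SchwartzMap.exists_one_add_rpow_pow_mul_norm_le {F : Type*} [NormedAddCommGroup F]
    [NormedSpace ℝ F] (φ : SchwartzMap ℝ F) {p : ℝ} (hp : 0 ≤ p) (l : ℕ) :
    ∃ K, ∀ u, 0 ≤ u → (1 + u ^ p) ^ l * ‖φ u‖ ≤ K := by
  set k := ⌈p⌉₊ * l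
  refine ⟨2 ^ l * (2 ^ k * ((Finset.Iic (k, 0)).sup
    fun m ↦ SchwartzMap.seminorm ℝ m.1 m.2) φ), fun u hu ↦ ?_⟩
  have h_seminorm := SchwartzMap.one_add_le_sup_seminorm_apply (𝕜 := ℝ) (m := (k, 0))
    le_rfl le_rfl φ u
  rw [norm_iteratedFDeriv_zero, Real.norm_of_nonneg hu] at h_seminorm
  calc (1 + u ^ p) ^ l * ‖φ u‖ ≤ (2 * (1 + u) ^ ⌈p⌉₊) ^ l * ‖φ u‖ := by
        gcongr
        exact one_add_rpow_le_two_mul_one_add_pow_ceil hu hp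
    _ = 2 ^ l * ((1 + u) ^ k * ‖φ u‖) := by rw [mul_pow, ← pow_mul, mul_assoc]
    _ ≤ _ := by gcongr

theorem stmt0_general (γ : ℝ) (hγ : 0 < γ) (φ : SchwartzMap ℝ ℝ)
    (hφ_nonneg : ∀ x : ℝ, 0 ≤ φ x) (hφ_ne : ∃ x : ℝ, φ x ≠ 0)
    (hhat_even : ∀ k : ℝ, fourierHat (fun x => φ x) (-k) = fourierHat (fun x => φ x) k) :
    (0 < ∫ s in Set.Ioi (0 : ℝ), s ^ (2 / γ - 1) * φ s) ∧
    (∀ lam : ℝ, 0 < lam →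
      ∫ t in Set.Ioi (0 : ℝ),
        t ^ (2 / γ - 1) *
          ((∫ s in Set.Ioi (0 : ℝ), s ^ (2 / γ - 1) * φ s)⁻¹ * φ (lam ^ (γ / 2) * t))
        = lam⁻¹) ∧
    (∀ lam : ℝ, 0 ≤ lam → ∀ t : ℝ, 0 < t →
      0 ≤ (∫ s in Set.Ioi (0 : ℝ), s ^ (2 / γ - 1) * φ s)⁻¹ * φ (lam ^ (γ / 2) * t)) ∧
    (∀ l : ℕ, ∃ C : ℝ, 0 < C ∧ ∀ lam : ℝ, 0 ≤ lam → ∀ t : ℝ, 0 < t →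
      (1 + t ^ (2 / γ) * lam) ^ l *
        ((∫ s in Set.Ioi (0 : ℝ), s ^ (2 / γ - 1) * φ s)⁻¹ * φ (lam ^ (γ / 2) * t)) ≤ C) := by
  set I := ∫ s in Set.Ioi (0 : ℝ), s ^ (2 / γ - 1) * φ s
  have ha : 0 < 2 / γ := by positivity
  have hI : 0 < I := by
    obtain ⟨x, hx⟩ := hφ_ne
    obtain ⟨y, hy, hφy⟩ := exists_pos_ne_zero_of_even φ.continuous
      (even_of_fourierHat_even φ hhat_even) hx
    refine setIntegral_pos_of_continuousOn isOpen_Ioi ?_ (φ.integrableOn_rpow_mul_Ioi ha)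
      (fun t ht ↦ mul_nonneg (Real.rpow_nonneg (le_of_lt ht) _) (hφ_nonneg t))
      (mem_Ioi.2 hy) (mul_ne_zero (Real.rpow_pos_of_pos hy _).ne' hφy)
    exact (continuousOn_id.rpow_const fun t ht ↦ Or.inl (ne_of_gt ht)).mul
      φ.continuous.continuousOn
  refine ⟨hI, fun lam hlam ↦ ?_,
    fun lam _ t _ ↦ mul_nonneg (inv_nonneg.2 hI.le) (hφ_nonneg _), fun l ↦ ?_⟩
  · simp_rw [mul_left_comm _ I⁻¹]
    rw [integral_const_mul, integral_Ioi_rpow_mul_comp_mul _ _ (Real.rpow_pos_of_pos hlam _),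
      ← Real.rpow_mul hlam.le, mul_left_comm, inv_mul_cancel₀ hI.ne', mul_one,
      show γ / 2 * -(2 / γ) = -1 by field_simp, Real.rpow_neg_one]
  · obtain ⟨K, hK⟩ := φ.exists_one_add_rpow_pow_mul_norm_le ha.le l
    refine ⟨max (I⁻¹ * K) 1, lt_max_of_lt_right one_pos, fun lam hlam t ht ↦ ?_⟩
    have h_scale : t ^ (2 / γ) * lam = (lam ^ (γ / 2) * t) ^ (2 / γ) := by
      rw [Real.mul_rpow (by positivity) ht.le, ← inv_div γ 2,
        Real.rpow_rpow_inv hlam (by positivity), mul_comm]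
    set u := lam ^ (γ / 2) * t
    calc (1 + t ^ (2 / γ) * lam) ^ l * (I⁻¹ * φ u)
        = I⁻¹ * ((1 + u ^ (2 / γ)) ^ l * φ u) := by rw [h_scale]; ring
      _ ≤ I⁻¹ * K := by
          gcongr
          exact (mul_le_mul_of_nonneg_left (Real.le_norm_self _) (by positivity)).trans
            (hK u (by positivity))
      _ ≤ max (I⁻¹ * K) 1 := le_max_left _ _

theorem stmt0 (γ : ℝ) (hγ : 0 < γ) (φ : SchwartzMap ℝ ℝ)
    (hφ_nonneg : ∀ x : ℝ, 0 ≤ φ x) (hφ_ne : ∃ x : ℝ, φ x ≠ 0)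
    (hhat_even : ∀ k : ℝ, fourierHat (fun x => φ x) (-k) = fourierHat (fun x => φ x) k)
    (hhat_supp : ∀ k : ℝ, k ∉ Set.Icc (-1 : ℝ) 1 → fourierHat (fun x => φ x) k = 0) :
    (0 < ∫ s in Set.Ioi (0 : ℝ), s ^ (2 / γ - 1) * φ s) ∧
    (∀ lam : ℝ, 0 < lam →
      ∫ t in Set.Ioi (0 : ℝ),
        t ^ (2 / γ - 1) *
          ((∫ s in Set.Ioi (0 : ℝ), s ^ (2 / γ - 1) * φ s)⁻¹ * φ (lam ^ (γ / 2) * t))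
        = lam⁻¹) ∧
    (∀ lam : ℝ, 0 ≤ lam → ∀ t : ℝ, 0 < t →
      0 ≤ (∫ s in Set.Ioi (0 : ℝ), s ^ (2 / γ - 1) * φ s)⁻¹ * φ (lam ^ (γ / 2) * t)) ∧
    (∀ l : ℕ, ∃ C : ℝ, 0 < C ∧ ∀ lam : ℝ, 0 ≤ lam → ∀ t : ℝ, 0 < t →
      (1 + t ^ (2 / γ) * lam) ^ l *
        ((∫ s in Set.Ioi (0 : ℝ), s ^ (2 / γ - 1) * φ s)⁻¹ * φ (lam ^ (γ / 2) * t)) ≤ C) :=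
  stmt0_general γ hγ φ hφ_nonneg hφ_ne hhat_even
end

section
/- Let φ : ℝ → ℝ be an even Schwartz function whose Fourier transform φ̂ is supported in [−1,1]. Then for every t > 0 and every λ ∈ [0,4], Σ_{n∈ℤ} φ((arccos(1 − λ/2) − 2πn)·t) = Σ_{k∈ℤ, |k|≤t} t^{−1} φ̂(k/t) · T_k(1 − λ/2), where T_k is the Chebyshev polynomial of the first kind. In particular, the function W*_t(λ) := Σ_{n∈ℤ} φ((arccos(1 − λ/2) − 2πn)·t) is the restriction to [0,4] of a polynomial in λ of degree at most ⌊t⌋. -/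
/-!
The sum over `n` is the periodization of `y ↦ φ (-2π t y)` evaluated at `-θ / 2π`, so Poisson
summation turns it into `∑ₖ t⁻¹ φ̂(k/t) e^{ikθ}`. The support condition on `φ̂` leaves only the
terms with `|k| ≤ t`, evenness of `φ̂` turns `e^{ikθ}` into `cos kθ`, and for
`θ = arccos (1 - λ/2)` this is `T_k (1 - λ/2)`, a polynomial of degree `|k|` in `λ`.
-/

open MeasureTheory Real

open scoped SchwartzMap FourierTransform

lemma fourierHat_neg_of_even {f : ℝ → ℝ} (hf : ∀ x, f (-x) = f x) (k : ℝ) :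
    fourierHat f (-k) = fourierHat f k := by
  unfold fourierHat
  rw [← integral_neg_eq_self]
  simp only [hf, Complex.ofReal_neg, neg_mul, mul_neg, neg_neg]

lemma fourier_ofReal_comp_mul (f : ℝ → ℝ) {c : ℝ} (hc : c ≠ 0) (w : ℝ) :
    𝓕 (fun y => (f (c * y) : ℂ)) w = (2 * π / |c| : ℝ) * fourierHat f (2 * π * w / c) := by
  let g : ℝ → ℂ := fun u => (f u : ℂ) * Complex.exp (-(Complex.I * ↑(2 * π * w / c) * u))
  have hg (v : ℝ) :
      Complex.exp (↑(-2 * π * v * w) * Complex.I) • (f (c * v) : ℂ) = g (c * v) := by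
    have hc' : (c : ℂ) ≠ 0 := by exact_mod_cast hc
    simp only [g, smul_eq_mul, mul_comm (f (c * v) : ℂ)]
    congr 2
    push_cast
    field_simp
  rw [Real.fourier_real_eq_integral_exp_smul, fourierHat, integral_congr_ae (.of_forall hg),
    Measure.integral_comp_mul_left g c, abs_inv, Complex.real_smul]
  generalize ∫ y, g y = J
  have : (π : ℂ) ≠ 0 := by exact_mod_cast pi_ne_zero
  push_cast
  field_simp

lemma tsum_periodization_eq_tsum_fourierHat_mul_exp (φ : 𝓢(ℝ, ℝ)) {t : ℝ} (ht : 0 < t) (θ : ℝ) :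
    ((∑' n : ℤ, φ ((θ - 2 * π * n) * t) : ℝ) : ℂ) =
      ∑' k : ℤ, (t : ℂ)⁻¹ * fourierHat φ (k / t) * Complex.exp (k * θ * Complex.I) := by
  have hπ := pi_pos
  have hc : -2 * π * t ≠ 0 := by positivity
  let ψ : 𝓢(ℝ, ℂ) := SchwartzMap.compCLMOfContinuousLinearEquiv ℝ
    (ContinuousLinearEquiv.unitsEquivAut ℝ (Units.mk0 _ hc))
    (φ.postcompCLM (𝕜 := ℝ) Complex.ofRealCLM)
  have hψ : ⇑ψ = fun y => (φ (-2 * π * t * y) : ℂ) := by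
    ext y; simp [ψ, mul_comm y]
  have hcoeff (n : ℤ) : 𝓕 ψ n * fourier n ((-θ / (2 * π) : ℝ) : UnitAddCircle) =
      (t : ℂ)⁻¹ * fourierHat φ (-n / t) * Complex.exp (-n * θ * Complex.I) := by
    have habs : |-2 * π * t| = 2 * π * t := by rw [abs_of_neg (by nlinarith)]; ring
    rw [SchwartzMap.fourier_coe, hψ, fourier_ofReal_comp_mul _ hc, fourier_coe_apply, habs]
    congr 1
    · congr 1
      · push_cast; field_simp
      · congr 1; field_simp
    · congr 1; push_cast; field_simp
  calc ((∑' n : ℤ, φ ((θ - 2 * π * n) * t) : ℝ) : ℂ)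
      = ∑' n : ℤ, ψ (-θ / (2 * π) + n) := by
        rw [Complex.ofReal_tsum, hψ]
        refine tsum_congr fun n => ?_
        beta_reduce
        congr 2
        field_simp
        ring
    _ = ∑' n : ℤ, 𝓕 ψ n * fourier n ((-θ / (2 * π) : ℝ) : UnitAddCircle) :=
        ψ.tsum_eq_tsum_fourier _
    _ = _ := by
        rw [tsum_congr hcoeff, ← (Equiv.neg ℤ).tsum_eq]
        simp only [Equiv.neg_apply, Int.cast_neg, neg_neg]

lemma Int.mem_Icc_neg_floor_iff_abs_le {t : ℝ} {k : ℤ} :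
    k ∈ Finset.Icc (-⌊t⌋) ⌊t⌋ ↔ |(k : ℝ)| ≤ t := by
  rw [Finset.mem_Icc, neg_le, Int.le_floor, Int.le_floor, abs_le, Int.cast_neg, neg_le]

lemma sum_Icc_mul_exp_eq_sum_mul_cos {g : ℤ → ℂ} (hg : ∀ k, g (-k) = g k) (N : ℤ) (θ : ℝ) :
    ∑ k ∈ Finset.Icc (-N) N, g k * Complex.exp (k * θ * Complex.I) =
      ∑ k ∈ Finset.Icc (-N) N, g k * Real.cos (k * θ) := by
  have hneg : ∑ k ∈ Finset.Icc (-N) N, g k * Complex.exp (k * θ * Complex.I) =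
      ∑ k ∈ Finset.Icc (-N) N, g k * Complex.exp (-(k * θ) * Complex.I) := by
    refine Finset.sum_nbij' (-·) (-·) ?_ ?_ (by simp) (by simp) fun k _ => ?_
    all_goals simp only [Finset.mem_Icc, hg]
    · intro k hk; omega
    · intro k hk; omega
    · push_cast; ring_nf
  calc _ = (∑ k ∈ Finset.Icc (-N) N, g k * Complex.exp (k * θ * Complex.I) +
        ∑ k ∈ Finset.Icc (-N) N, g k * Complex.exp (-(k * θ) * Complex.I)) / 2 := by
        rw [← hneg]; ring
    _ = _ := by
      rw [← Finset.sum_add_distrib, Finset.sum_div]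
      refine Finset.sum_congr rfl fun k _ => ?_
      rw [Complex.ofReal_cos, ← mul_div_cancel_left₀ (Complex.cos _) two_ne_zero, Complex.two_cos]
      push_cast; ring

lemma tsum_periodization_eq_sum_fourierHat_mul_cos (φ : 𝓢(ℝ, ℝ)) (hφ_even : ∀ x, φ (-x) = φ x)
    (hhat_supp : ∀ k : ℝ, k ∉ Set.Icc (-1 : ℝ) 1 → fourierHat φ k = 0)
    {t : ℝ} (ht : 0 < t) (θ : ℝ) :
    ((∑' n : ℤ, φ ((θ - 2 * π * n) * t) : ℝ) : ℂ) =
      ∑ k ∈ Finset.Icc (-⌊t⌋) ⌊t⌋, (t : ℂ)⁻¹ * fourierHat φ (k / t) * Real.cos (k * θ) := by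
  rw [tsum_periodization_eq_tsum_fourierHat_mul_exp φ ht θ,
    tsum_eq_sum (s := Finset.Icc (-⌊t⌋) ⌊t⌋),
    sum_Icc_mul_exp_eq_sum_mul_cos (g := fun k => (t : ℂ)⁻¹ * fourierHat φ (k / t))]
  · intro k
    rw [Int.cast_neg, neg_div, fourierHat_neg_of_even hφ_even]
  · intro k hk
    rw [Int.mem_Icc_neg_floor_iff_abs_le, not_le] at hk
    have hout : (k / t : ℝ) ∉ Set.Icc (-1) 1 := by
      rw [Set.mem_Icc, ← abs_le, abs_div, abs_of_pos ht, div_le_one ht]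
      exact hk.not_ge
    rw [hhat_supp _ hout, mul_zero, zero_mul]

open Polynomial in
lemma exists_natDegree_le_eval_eq_sum_chebyshevT (N : ℤ) (c : ℤ → ℝ) :
    ∃ P : ℝ[X], P.natDegree ≤ N.toNat ∧
      ∀ x, P.eval x = ∑ k ∈ Finset.Icc (-N) N, c k * (Chebyshev.T ℝ k).eval (1 - x / 2) := by
  refine ⟨∑ k ∈ Finset.Icc (-N) N, C (c k) * (Chebyshev.T ℝ k).comp (1 - C 2⁻¹ * X), ?_, ?_⟩
  · refine natDegree_sum_le_of_forall_le _ _ fun k hk => ?_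
    have hlin : (1 - C (2⁻¹ : ℝ) * X).natDegree ≤ 1 := by compute_degree
    calc _ ≤ ((Chebyshev.T ℝ k).comp (1 - C 2⁻¹ * X)).natDegree := natDegree_C_mul_le _ _
      _ ≤ (Chebyshev.T ℝ k).natDegree * (1 - C (2⁻¹ : ℝ) * X).natDegree := natDegree_comp_le
      _ ≤ k.natAbs * 1 := by rw [Chebyshev.natDegree_T]; gcongr
      _ ≤ N.toNat := by rw [Finset.mem_Icc] at hk; omega
  · intro x
    simp [eval_finsetSum, div_eq_inv_mul]

lemma tsum_arccos_eq_sum_fourierHat_mul_chebyshevT (φ : 𝓢(ℝ, ℝ)) (hφ_even : ∀ x, φ (-x) = φ x)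
    (hhat_supp : ∀ k : ℝ, k ∉ Set.Icc (-1 : ℝ) 1 → fourierHat φ k = 0)
    {t : ℝ} (ht : 0 < t) {x : ℝ} (hx₁ : -1 ≤ x) (hx₂ : x ≤ 1) :
    ((∑' n : ℤ, φ ((arccos x - 2 * π * n) * t) : ℝ) : ℂ) =
      ∑ k ∈ Finset.Icc (-⌊t⌋) ⌊t⌋,
        (t : ℂ)⁻¹ * fourierHat φ (k / t) * ((Polynomial.Chebyshev.T ℝ k).eval x : ℝ) := by
  rw [tsum_periodization_eq_sum_fourierHat_mul_cos φ hφ_even hhat_supp ht]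
  refine Finset.sum_congr rfl fun k _ => ?_
  rw [← Polynomial.Chebyshev.T_real_cos, cos_arccos hx₁ hx₂]

theorem stmt1 (φ : SchwartzMap ℝ ℝ) (hφ_even : ∀ x : ℝ, φ (-x) = φ x)
    (hhat_supp : ∀ k : ℝ, k ∉ Set.Icc (-1 : ℝ) 1 → fourierHat (fun x => φ x) k = 0) :
    (∀ t : ℝ, 0 < t → ∀ lam ∈ Set.Icc (0 : ℝ) 4,
      ((∑' n : ℤ, φ ((Real.arccos (1 - lam / 2) - 2 * Real.pi * n) * t) : ℝ) : ℂ)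
        = ∑ k ∈ Finset.Icc (-⌊t⌋) ⌊t⌋,
            (t : ℂ)⁻¹ * fourierHat (fun x => φ x) (k / t) *
              ((Polynomial.Chebyshev.T ℝ k).eval (1 - lam / 2) : ℝ)) ∧
    (∀ t : ℝ, 0 < t → ∃ P : Polynomial ℝ, P.natDegree ≤ ⌊t⌋.toNat ∧
      ∀ lam ∈ Set.Icc (0 : ℝ) 4,
        (∑' n : ℤ, φ ((Real.arccos (1 - lam / 2) - 2 * Real.pi * n) * t)) = P.eval lam) := by
  have hW (t : ℝ) (ht : 0 < t) (lam : ℝ) (hlam : lam ∈ Set.Icc (0 : ℝ) 4) :=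
    tsum_arccos_eq_sum_fourierHat_mul_chebyshevT φ hφ_even hhat_supp ht
      (x := 1 - lam / 2) (by linarith [hlam.2]) (by linarith [hlam.1])
  refine ⟨hW, fun t ht => ?_⟩
  obtain ⟨P, hdeg, hP⟩ :=
    exists_natDegree_le_eval_eq_sum_chebyshevT ⌊t⌋ fun k => t⁻¹ * (fourierHat φ (k / t)).re
  refine ⟨P, hdeg, fun lam hlam => ?_⟩
  have hre := congrArg Complex.re (hW t ht lam hlam)
  rw [Complex.ofReal_re] at hre
  rw [hre, hP, Complex.re_sum]
  refine Finset.sum_congr rfl fun k _ => ?_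
  rw [← Complex.ofReal_inv, Complex.re_mul_ofReal, Complex.re_ofReal_mul]
end

section
/- Let φ : ℝ → [0,∞) be an even, nonnegative Schwartz function with ∫₀^∞ s·φ(s) ds = 1. Define W*_t(λ) := Σ_{n∈ℤ} φ((arccos(1 − λ/2) − 2πn)·t) for t > 0 and λ ∈ (0,4]. Then for every λ ∈ (0,4], ∫₀^∞ t · W*_t(λ) dt = λ^{−1}. -/
/-!
Scaling `t ↦ a t` turns the `n`-th term into `∫₀^∞ t φ(a t) dt = a⁻² ∫₀^∞ s φ(s) ds = a⁻²`
with `a = x - 2πn`, `x = arccos (1 - λ/2)`; evenness of `φ` handles `a < 0`, and positivity lets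
integral and sum be swapped. What remains is `∑ₙ (x - 2πn)⁻² = (4 sin² (x/2))⁻¹ = λ⁻¹`, which is
Parseval's identity for `θ ↦ exp (i x θ)` on `(0, 1]`, whose Fourier coefficients are
`(exp (i x) - 1) / (i (x - 2πn))`.
-/

open MeasureTheory Real Set

lemma sub_two_pi_mul_int_ne_zero {x : ℝ} (hx : sin (x / 2) ≠ 0) (n : ℤ) : x - 2 * π * n ≠ 0 := by
  intro h
  apply hx
  rw [show x / 2 = n * π by linarith, sin_int_mul_pi]

lemma fourierCoeffOn_exp_mul_I {x : ℝ} (hx : sin (x / 2) ≠ 0) (n : ℤ) :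
    fourierCoeffOn zero_lt_one (fun θ : ℝ => Complex.exp (Complex.I * (x * θ : ℝ))) n =
      (Complex.exp (Complex.I * x) - 1) / (Complex.I * (x - 2 * π * n : ℝ)) := by
  have hc : Complex.I * (x - 2 * π * n : ℝ) ≠ 0 :=
    mul_ne_zero Complex.I_ne_zero (Complex.ofReal_ne_zero.mpr (sub_two_pi_mul_int_ne_zero hx n))
  have hintegrand : ∀ θ : ℝ,
      fourier (-n) (θ : AddCircle ((1 : ℝ) - 0)) • Complex.exp (Complex.I * (x * θ : ℝ)) =
        Complex.exp (Complex.I * (x - 2 * π * n : ℝ) * θ) := by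
    intro θ
    rw [fourier_coe_apply, smul_eq_mul, ← Complex.exp_add]
    push_cast
    ring_nf
  rw [fourierCoeffOn_eq_integral, intervalIntegral.integral_congr fun θ _ => hintegrand θ,
    integral_exp_mul_complex hc]
  have hperiod :
      Complex.exp (Complex.I * (x - 2 * π * n : ℝ) * (1 : ℝ)) = Complex.exp (Complex.I * x) := by
    have := Complex.exp_int_mul_two_pi_mul_I (-n)
    rw [← mul_one (Complex.exp (Complex.I * x)), ← this, ← Complex.exp_add]
    push_cast
    ring_nf
  rw [hperiod]
  simp

lemma hasSum_inv_sq_sub_two_pi_mul_int {x : ℝ} (hx : sin (x / 2) ≠ 0) :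
    HasSum (fun n : ℤ => ((x - 2 * π * n) ^ 2)⁻¹) (4 * sin (x / 2) ^ 2)⁻¹ := by
  have hL2 : MemLp (fun θ : ℝ => Complex.exp (Complex.I * (x * θ : ℝ))) 2
      (volume.restrict (Ioc 0 1)) :=
    MemLp.of_bound (by fun_prop) 1 (ae_of_all _ fun θ => by
      rw [mul_comm, Complex.norm_exp_ofReal_mul_I])
  have hparseval := hasSum_sq_fourierCoeffOn zero_lt_one hL2
  have hterm : ∀ n : ℤ, ‖fourierCoeffOn zero_lt_one
      (fun θ : ℝ => Complex.exp (Complex.I * (x * θ : ℝ))) n‖ ^ 2 =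
        4 * sin (x / 2) ^ 2 * ((x - 2 * π * n) ^ 2)⁻¹ := by
    intro n
    rw [fourierCoeffOn_exp_mul_I hx, norm_div, norm_mul, Complex.norm_I, one_mul,
      Complex.norm_exp_I_mul_ofReal_sub_one, Complex.norm_real, Real.norm_eq_abs, Real.norm_eq_abs,
      div_pow, sq_abs, sq_abs, mul_pow, div_eq_mul_inv]
    norm_num
  have hnorm :
      (1 - 0 : ℝ)⁻¹ • ∫ θ in (0 : ℝ)..1, ‖Complex.exp (Complex.I * (x * θ : ℝ))‖ ^ 2 = 1 := by
    simp only [Complex.norm_exp_I_mul_ofReal, one_pow, intervalIntegral.integral_const]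
    norm_num
  rw [hnorm] at hparseval
  have hsin : 4 * sin (x / 2) ^ 2 ≠ 0 := by positivity
  have hscaled := hparseval.mul_left (4 * sin (x / 2) ^ 2)⁻¹
  rw [mul_one] at hscaled
  refine hscaled.congr_fun fun n => ?_
  rw [hterm, ← mul_assoc, inv_mul_cancel₀ hsin, one_mul]

lemma integral_Ioi_mul_comp_mul {f : ℝ → ℝ} (heven : ∀ s, f (-s) = f s) {a : ℝ} (ha : a ≠ 0) :
    ∫ t in Ioi (0 : ℝ), t * f (a * t) = (a ^ 2)⁻¹ * ∫ s in Ioi (0 : ℝ), s * f s := by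
  wlog hpos : 0 < a generalizing a
  · have hneg : ∀ t, f (a * t) = f (-a * t) := fun t => by rw [neg_mul, heven]
    simp_rw [hneg]
    rw [this (neg_ne_zero.mpr ha) (by grind), neg_sq]
  calc ∫ t in Ioi (0 : ℝ), t * f (a * t)
      = ∫ t in Ioi (0 : ℝ), a⁻¹ * ((a * t) * f (a * t)) := by
        refine setIntegral_congr_fun measurableSet_Ioi fun t _ => ?_
        rw [← mul_assoc, inv_mul_cancel_left₀ ha]
    _ = a⁻¹ * (a⁻¹ * ∫ s in Ioi (0 : ℝ), s * f s) := by
        rw [integral_const_mul, integral_comp_mul_left_Ioi (fun s => s * f s) 0 hpos, mul_zero,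
          smul_eq_mul]
    _ = (a ^ 2)⁻¹ * ∫ s in Ioi (0 : ℝ), s * f s := by rw [← mul_assoc, sq, mul_inv]

theorem integral_mul_tsum_comp_sub_two_pi_mul_int {φ : ℝ → ℝ} (heven : ∀ s, φ (-s) = φ s)
    (hnonneg : ∀ s, 0 ≤ φ s) (hnorm : ∫ s in Ioi (0 : ℝ), s * φ s = 1) {x : ℝ}
    (hx : sin (x / 2) ≠ 0) :
    ∫ t in Ioi (0 : ℝ), t * ∑' n : ℤ, φ ((x - 2 * π * n) * t) = (4 * sin (x / 2) ^ 2)⁻¹ := by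
  have hterm : ∀ n : ℤ,
      ∫ t in Ioi (0 : ℝ), t * φ ((x - 2 * π * n) * t) = ((x - 2 * π * n) ^ 2)⁻¹ := fun n => by
    rw [integral_Ioi_mul_comp_mul heven (sub_two_pi_mul_int_ne_zero hx n), hnorm, mul_one]
  -- integrability comes for free: a nonzero Bochner integral is that of an integrable function
  have hintegrable : ∀ n : ℤ,
      Integrable (fun t => t * φ ((x - 2 * π * n) * t)) (volume.restrict (Ioi 0)) :=
    fun n => Integrable.of_integral_ne_zero <| by
      rw [hterm]; exact inv_ne_zero (pow_ne_zero 2 (sub_two_pi_mul_int_ne_zero hx n))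
  have hterm_norm : ∀ n : ℤ,
      ∫ t in Ioi (0 : ℝ), ‖t * φ ((x - 2 * π * n) * t)‖ = ((x - 2 * π * n) ^ 2)⁻¹ := fun n => by
    rw [← hterm n]
    exact setIntegral_congr_fun measurableSet_Ioi fun t ht =>
      Real.norm_of_nonneg (mul_nonneg (le_of_lt ht) (hnonneg _))
  have hseries := hasSum_inv_sq_sub_two_pi_mul_int hx
  calc ∫ t in Ioi (0 : ℝ), t * ∑' n : ℤ, φ ((x - 2 * π * n) * t)
      = ∫ t in Ioi (0 : ℝ), ∑' n : ℤ, t * φ ((x - 2 * π * n) * t) := by simp_rw [tsum_mul_left]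
    _ = ∑' n : ℤ, ∫ t in Ioi (0 : ℝ), t * φ ((x - 2 * π * n) * t) :=
        (integral_tsum_of_summable_integral_norm hintegrable
          (hseries.summable.congr fun n => (hterm_norm n).symm)).symm
    _ = (4 * sin (x / 2) ^ 2)⁻¹ := by rw [tsum_congr hterm, hseries.tsum_eq]

lemma four_mul_sin_half_sq (x : ℝ) : 4 * sin (x / 2) ^ 2 = 2 * (1 - cos x) := by
  have hdouble := cos_two_mul' (x / 2)
  rw [mul_div_cancel₀ x two_ne_zero] at hdouble
  nlinarith [cos_sq_add_sin_sq (x / 2)]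

theorem stmt2 (φ : SchwartzMap ℝ ℝ) (hφ_even : ∀ x : ℝ, φ (-x) = φ x)
    (hφ_nonneg : ∀ x : ℝ, 0 ≤ φ x)
    (hφ_norm : ∫ s in Set.Ioi (0 : ℝ), s * φ s = 1) :
    ∀ lam ∈ Set.Ioc (0 : ℝ) 4,
      ∫ t in Set.Ioi (0 : ℝ),
        t * ∑' n : ℤ, φ ((Real.arccos (1 - lam / 2) - 2 * Real.pi * n) * t) = lam⁻¹ := by
  rintro lam ⟨hlam_pos, hlam_le⟩
  have hsin : 4 * sin (arccos (1 - lam / 2) / 2) ^ 2 = lam := by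
    rw [four_mul_sin_half_sq, cos_arccos (by linarith) (by linarith)]
    ring
  have hsin_ne : sin (arccos (1 - lam / 2) / 2) ≠ 0 := by
    rintro h
    rw [h] at hsin
    linarith
  rw [integral_mul_tsum_comp_sub_two_pi_mul_int hφ_even hφ_nonneg hφ_norm hsin_ne, hsin]
end

section
/- Let φ : ℝ → ℝ be an even Schwartz function whose Fourier transform φ̂ is supported in [−1,1], and for t > 0 set φ*_t(x) := Σ_{n∈ℤ} φ((x − 2πn)·t). Then for all integers l ≥ 0 and m ≥ 0 there is a constant C_{l,m} > 0 such that for all t ≥ 1 and all x ∈ ℝ, (1 + t²(1 − cos x))^l · t^{−m} · |(d/dx)^m φ*_t(x)| ≤ C_{l,m}. -/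
/-!
Write `F = φ*_t`. Termwise differentiation gives `F⁽ᵐ⁾(x) = tᵐ ∑ₙ φ⁽ᵐ⁾((x - 2πn) t)`, and `F` is
`2π`-periodic, so it suffices to take `|x| ≤ π`. Then every `u = (x - 2πn) t` satisfies
`|u| ≥ t |x|` and `|u| ≥ |n|`, while `1 - cos x ≤ x² / 2`; hence
`(1 + t² (1 - cos x)) ≤ (1 + |u|)²` and `1 + n² ≤ (1 + |u|)²`. The Schwartz decay of `φ⁽ᵐ⁾` at
order `2l + 2` then bounds the weighted `n`-th term by `C / (1 + n²)`, which is summable.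
-/

open MeasureTheory Real

open Function Metric Filter Topology
open scoped SchwartzMap

lemma Function.Periodic.iteratedDeriv {𝕜 F : Type*} [NontriviallyNormedField 𝕜]
    [NormedAddCommGroup F] [NormedSpace 𝕜 F] {f : 𝕜 → F} {c : 𝕜} (h : Periodic f c) (m : ℕ) :
    Periodic (iteratedDeriv m f) c := fun x => by
  rw [← congrFun (iteratedDeriv_comp_add_const m f c) x, funext h]

lemma periodic_tsum_comp_sub_mul (f : ℝ → ℝ) (c t : ℝ) :
    Periodic (fun y => ∑' n : ℤ, f ((y - c * n) * t)) c := fun y =>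
  calc ∑' n : ℤ, f ((y + c - c * n) * t)
      = ∑' n : ℤ, f ((y - c * ((Equiv.subRight (1 : ℤ) n : ℤ) : ℝ)) * t) := by
        congr! 3 with n; rw [Equiv.subRight_apply]; push_cast; ring
    _ = ∑' n : ℤ, f ((y - c * n) * t) :=
        (Equiv.subRight 1).tsum_eq fun n : ℤ => f ((y - c * n) * t)

lemma summable_one_add_sq_inv_int : Summable fun n : ℤ => (1 + (n : ℝ) ^ 2)⁻¹ := by
  refine (summable_one_div_int_pow.2 one_lt_two).of_norm_bounded_eventually ?_
  filter_upwards [eventually_cofinite_ne 0] with n hn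
  rw [norm_inv, norm_of_nonneg (by positivity), one_div]
  exact inv_anti₀ (by positivity) (by linarith)

lemma SchwartzMap.exists_one_add_abs_pow_mul_abs_iteratedDeriv_le (φ : 𝓢(ℝ, ℝ)) (k m : ℕ) :
    ∃ C, ∀ u : ℝ, (1 + |u|) ^ k * |iteratedDeriv m φ u| ≤ C :=
  ⟨_, fun u => by
    simpa [norm_iteratedFDeriv_eq_norm_iteratedDeriv] using
      φ.one_add_le_sup_seminorm_apply (𝕜 := ℝ) (m := (k, m)) le_rfl le_rfl u⟩

lemma one_add_sq_le_one_add_abs_sub_sq {y : ℝ} (hy : |y| ≤ 4) (n : ℤ) :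
    1 + (n : ℝ) ^ 2 ≤ (1 + |y - 2 * π * n|) ^ 2 := by
  rcases eq_or_ne n 0 with rfl | hn
  · push_cast; nlinarith [abs_nonneg (y - 2 * π * 0)]
  have hn : (1 : ℝ) ≤ |(n : ℝ)| := by exact_mod_cast Int.one_le_abs hn
  have h : 2 * π * |(n : ℝ)| - |y| ≤ |y - 2 * π * n| := by
    simpa [abs_mul, abs_of_pos two_pi_pos, abs_sub_comm] using abs_sub_abs_le_abs_sub (2 * π * n) y
  have h2 : 2 * |(n : ℝ)| ≤ 1 + |y - 2 * π * n| := by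
    nlinarith [mul_le_mul_of_nonneg_right pi_gt_three.le (abs_nonneg (n : ℝ))]
  calc 1 + (n : ℝ) ^ 2 ≤ (2 * |(n : ℝ)|) ^ 2 := by nlinarith [sq_abs (n : ℝ)]
    _ ≤ _ := by gcongr

lemma abs_le_abs_sub_two_pi_mul {x : ℝ} (hx : |x| ≤ π) (n : ℤ) : |x| ≤ |x - 2 * π * n| := by
  rcases eq_or_ne n 0 with rfl | hn
  · simp
  have hn : (1 : ℝ) ≤ |(n : ℝ)| := by exact_mod_cast Int.one_le_abs hn
  have h : 2 * π * |(n : ℝ)| - |x| ≤ |x - 2 * π * n| := by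
    simpa [abs_mul, abs_of_pos two_pi_pos, abs_sub_comm] using abs_sub_abs_le_abs_sub (2 * π * n) x
  nlinarith [pi_pos]

lemma one_add_sq_le_one_add_abs_sub_mul_sq {y t : ℝ} (ht : 1 ≤ t) (hy : |y| ≤ 4) (n : ℤ) :
    1 + (n : ℝ) ^ 2 ≤ (1 + |(y - 2 * π * n) * t|) ^ 2 := by
  refine (one_add_sq_le_one_add_abs_sub_sq hy n).trans ?_
  rw [abs_mul, abs_of_pos (by linarith : 0 < t)]
  gcongr
  exact le_mul_of_one_le_right (abs_nonneg _) ht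

lemma one_add_sq_mul_one_sub_cos_le {x t : ℝ} (ht : 0 ≤ t) (hx : |x| ≤ π) (n : ℤ) :
    1 + t ^ 2 * (1 - cos x) ≤ (1 + |(x - 2 * π * n) * t|) ^ 2 := by
  have hcos : 1 - cos x ≤ x ^ 2 / 2 := by linarith [one_sub_sq_div_two_le_cos (x := x)]
  have hu : t * |x| ≤ |(x - 2 * π * n) * t| := by
    rw [abs_mul, abs_of_nonneg ht, mul_comm t]
    exact mul_le_mul_of_nonneg_right (abs_le_abs_sub_two_pi_mul hx n) ht
  have hsq : t ^ 2 * x ^ 2 ≤ |(x - 2 * π * n) * t| ^ 2 := by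
    rw [← sq_abs x, ← mul_pow]; gcongr
  nlinarith [abs_nonneg ((x - 2 * π * n) * t)]

lemma pow_mul_abs_le_div_of_le {ψ : ℝ → ℝ} {k : ℕ} {C : ℝ}
    (hC : ∀ u, (1 + |u|) ^ (2 * k + 2) * |ψ u| ≤ C) {u w a : ℝ} (hw₀ : 0 ≤ w)
    (hw : w ≤ (1 + |u|) ^ 2) (ha₀ : 0 < a) (ha : a ≤ (1 + |u|) ^ 2) :
    w ^ k * |ψ u| ≤ C / a := by
  rw [le_div_iff₀ ha₀]
  calc w ^ k * |ψ u| * a ≤ ((1 + |u|) ^ 2) ^ k * |ψ u| * (1 + |u|) ^ 2 := by gcongr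
    _ = (1 + |u|) ^ (2 * k + 2) * |ψ u| := by rw [pow_add, pow_mul]; ring
    _ ≤ C := hC u

lemma abs_tsum_comp_sub_mul_le {ψ : ℝ → ℝ} {l : ℕ} {C : ℝ}
    (hC : ∀ u, (1 + |u|) ^ (2 * l + 2) * |ψ u| ≤ C) {t x : ℝ} (ht : 1 ≤ t) (hx : |x| ≤ π) :
    (1 + t ^ 2 * (1 - cos x)) ^ l * |∑' n : ℤ, ψ ((x - 2 * π * n) * t)| ≤
      C * ∑' n : ℤ, (1 + (n : ℝ) ^ 2)⁻¹ := by
  have hx4 : |x| ≤ 4 := hx.trans pi_lt_four.le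
  have hdecay (n : ℤ) {w : ℝ} (hw₀ : 0 ≤ w) (hw : w ≤ (1 + |(x - 2 * π * n) * t|) ^ 2) :
      w ^ l * |ψ ((x - 2 * π * n) * t)| ≤ C * (1 + (n : ℝ) ^ 2)⁻¹ :=
    div_eq_mul_inv C _ ▸ pow_mul_abs_le_div_of_le hC hw₀ hw (by positivity)
      (one_add_sq_le_one_add_abs_sub_mul_sq ht hx4 n)
  have hsum : Summable fun n : ℤ => |ψ ((x - 2 * π * n) * t)| :=
    (summable_one_add_sq_inv_int.mul_left C).of_nonneg_of_le (fun _ => abs_nonneg _) fun n => by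
      simpa using hdecay n zero_le_one (by nlinarith [abs_nonneg ((x - 2 * π * n) * t)])
  have hW : 0 ≤ 1 + t ^ 2 * (1 - cos x) := by nlinarith [cos_le_one x]
  calc (1 + t ^ 2 * (1 - cos x)) ^ l * |∑' n : ℤ, ψ ((x - 2 * π * n) * t)|
      ≤ (1 + t ^ 2 * (1 - cos x)) ^ l * ∑' n : ℤ, |ψ ((x - 2 * π * n) * t)| := by
        gcongr
        simpa only [Real.norm_eq_abs] using
          norm_tsum_le_tsum_norm (f := fun n : ℤ => ψ ((x - 2 * π * n) * t)) hsum
    _ = ∑' n : ℤ, (1 + t ^ 2 * (1 - cos x)) ^ l * |ψ ((x - 2 * π * n) * t)| := tsum_mul_left.symm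
    _ ≤ ∑' n : ℤ, C * (1 + (n : ℝ) ^ 2)⁻¹ :=
        (hsum.mul_left _).tsum_le_tsum (fun n => hdecay n hW
          (one_add_sq_mul_one_sub_cos_le (by linarith) hx n))
          (summable_one_add_sq_inv_int.mul_left C)
    _ = C * ∑' n : ℤ, (1 + (n : ℝ) ^ 2)⁻¹ := tsum_mul_left

namespace SchwartzMap

variable (φ : 𝓢(ℝ, ℝ))

lemma exists_abs_iteratedDeriv_comp_sub_mul_le (k : ℕ) :
    ∃ C, ∀ t, 1 ≤ t → ∀ y, |y| ≤ 4 → ∀ n : ℤ,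
      |iteratedDeriv k φ ((y - 2 * π * n) * t)| ≤ C * (1 + (n : ℝ) ^ 2)⁻¹ := by
  obtain ⟨C, hC⟩ := φ.exists_one_add_abs_pow_mul_abs_iteratedDeriv_le (2 * 0 + 2) k
  refine ⟨C, fun t ht y hy n => ?_⟩
  simpa [div_eq_mul_inv] using pow_mul_abs_le_div_of_le hC zero_le_one
    (by nlinarith [abs_nonneg ((y - 2 * π * n) * t)]) (by positivity)
    (one_add_sq_le_one_add_abs_sub_mul_sq ht hy n)

variable {φ} {t : ℝ}

lemma hasDerivAt_tsum_iteratedDeriv_comp_sub_mul (ht : 1 ≤ t) (k : ℕ) {x : ℝ} (hx : x ∈ ball (0 : ℝ) 4) :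
    HasDerivAt (fun y => ∑' n : ℤ, iteratedDeriv k φ ((y - 2 * π * n) * t))
      (t * ∑' n : ℤ, iteratedDeriv (k + 1) φ ((x - 2 * π * n) * t)) x := by
  obtain ⟨C, hC⟩ := φ.exists_abs_iteratedDeriv_comp_sub_mul_le (k + 1)
  obtain ⟨C₀, hC₀⟩ := φ.exists_abs_iteratedDeriv_comp_sub_mul_le k
  have hdiff : Differentiable ℝ (iteratedDeriv k φ) :=
    (φ.smooth ⊤).differentiable_iteratedDeriv k (WithTop.coe_lt_coe.2 (ENat.natCast_lt_top k))
  rw [← tsum_mul_left]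
  refine hasDerivAt_tsum_of_isPreconnected
    (u := fun n : ℤ => t * (C * (1 + (n : ℝ) ^ 2)⁻¹))
    (g := fun n y => iteratedDeriv k φ ((y - 2 * π * n) * t))
    (g' := fun n y => t * iteratedDeriv (k + 1) φ ((y - 2 * π * n) * t))
    ((summable_one_add_sq_inv_int.mul_left C).mul_left t)
    isOpen_ball (convex_ball (0 : ℝ) 4).isPreconnected (fun n y _ => ?_) (fun n y hy => ?_)
    (mem_ball_self four_pos) ?_ hx
  · have hinner : HasDerivAt (fun y : ℝ => (y - 2 * π * n) * t) t y := by
      simpa using ((hasDerivAt_id y).sub_const (2 * π * n)).mul_const t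
    rw [mul_comm t]
    exact (iteratedDeriv_succ (n := k) (f := φ) ▸ (hdiff _).hasDerivAt).comp y hinner
  · rw [norm_mul, norm_of_nonneg (by linarith)]
    gcongr
    exact hC t ht y (mem_ball_zero_iff.1 hy).le n
  · exact .of_norm_bounded (summable_one_add_sq_inv_int.mul_left C₀)
      fun n => hC₀ t ht 0 (by norm_num) n

lemma iteratedDeriv_tsum_comp_sub_mul (ht : 1 ≤ t) (m : ℕ) {x : ℝ} (hx : x ∈ ball (0 : ℝ) 4) :
    iteratedDeriv m (fun y => ∑' n : ℤ, φ ((y - 2 * π * n) * t)) x =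
      t ^ m * ∑' n : ℤ, iteratedDeriv m φ ((x - 2 * π * n) * t) := by
  induction m generalizing x with
  | zero => simp
  | succ m ih =>
    have hloc : iteratedDeriv m (fun y => ∑' n : ℤ, φ ((y - 2 * π * n) * t)) =ᶠ[𝓝 x]
        fun y => t ^ m * ∑' n : ℤ, iteratedDeriv m φ ((y - 2 * π * n) * t) :=
      eventually_of_mem (isOpen_ball.mem_nhds hx) fun y hy => ih hy
    rw [iteratedDeriv_succ, hloc.deriv_eq,
      ((hasDerivAt_tsum_iteratedDeriv_comp_sub_mul ht m hx).const_mul _).deriv, pow_succ, mul_assoc]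

end SchwartzMap

theorem stmt3_general (φ : SchwartzMap ℝ ℝ) :
    ∀ l m : ℕ, ∃ C : ℝ, 0 < C ∧ ∀ t : ℝ, 1 ≤ t → ∀ x : ℝ,
      (1 + t ^ 2 * (1 - Real.cos x)) ^ l * (t ^ m)⁻¹ *
        |iteratedDeriv m (fun y : ℝ => ∑' n : ℤ, φ ((y - 2 * Real.pi * n) * t)) x| ≤ C := by
  intro l m
  obtain ⟨C, hC⟩ := φ.exists_one_add_abs_pow_mul_abs_iteratedDeriv_le (2 * l + 2) m
  have hC₀ : 0 ≤ C := (mul_nonneg (by positivity) (abs_nonneg _)).trans (hC 0)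
  have hS : 0 ≤ ∑' n : ℤ, (1 + (n : ℝ) ^ 2)⁻¹ := tsum_nonneg fun _ => by positivity
  refine ⟨C * ∑' n : ℤ, (1 + (n : ℝ) ^ 2)⁻¹ + 1, by positivity, fun t ht x => ?_⟩
  have hper : Periodic (fun x => (1 + t ^ 2 * (1 - cos x)) ^ l * (t ^ m)⁻¹ *
      |iteratedDeriv m (fun y : ℝ => ∑' n : ℤ, φ ((y - 2 * π * n) * t)) x|) (2 * π) := fun x => by
    simp only [cos_add_two_pi, (periodic_tsum_comp_sub_mul φ (2 * π) t).iteratedDeriv m x]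
  obtain ⟨y, ⟨hy₁, hy₂⟩, hxy⟩ := hper.exists_mem_Ico two_pi_pos x (-π)
  have hy : |y| ≤ π := abs_le.2 ⟨hy₁, by linarith⟩
  have htm : 0 < t ^ m := by positivity
  rw [hxy, φ.iteratedDeriv_tsum_comp_sub_mul ht m (mem_ball_zero_iff.2 (hy.trans_lt pi_lt_four)),
    abs_mul, abs_of_pos htm, mul_assoc, inv_mul_cancel_left₀ htm.ne']
  linarith [abs_tsum_comp_sub_mul_le hC ht hy]

theorem stmt3 (φ : SchwartzMap ℝ ℝ) (hφ_even : ∀ x : ℝ, φ (-x) = φ x)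
    (hhat_supp : ∀ k : ℝ, k ∉ Set.Icc (-1 : ℝ) 1 → fourierHat (fun x => φ x) k = 0) :
    ∀ l m : ℕ, ∃ C : ℝ, 0 < C ∧ ∀ t : ℝ, 1 ≤ t → ∀ x : ℝ,
      (1 + t ^ 2 * (1 - Real.cos x)) ^ l * (t ^ m)⁻¹ *
        |iteratedDeriv m (fun y : ℝ => ∑' n : ℤ, φ ((y - 2 * Real.pi * n) * t)) x| ≤ C :=
  stmt3_general φ
end

section
/- Let φ : ℝ → [0,∞) be an even, nonnegative Schwartz function whose Fourier transform φ̂ is supported in [−1,1]. Set W_t(λ) := φ(√λ · t) and W*_t(λ) := Σ_{n∈ℤ} φ((arccos(1 − λ/2) − 2πn)·t). Then for every integer l ≥ 0 there is a constant C_l > 0 such that for all t ≥ 1 and all λ ∈ [0,4], |W*_t(λ) − W_t(λ)| ≤ C_l · t^{−1} · (1 + t²λ)^{−l}. In particular, for each fixed λ ≥ 0, W*_t(λ/t²) → φ(√λ) as t → ∞. -/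
open MeasureTheory Real Filter

/-!
Write `θ = arccos (1 - λ/2)`, so that `√λ = 2 sin (θ/2)`. The term `n = 0` of `W*_t(λ)` is
`φ(θ t)`, and `0 ≤ θ - √λ ≤ θ³/24 = O(λ)`; by the mean value theorem and the decay of `φ'` on
`[√λ t, ∞)`, `|φ(θ t) - φ(√λ t)| ≲ λ t (1 + √λ t)^{-2l-2} ≤ t⁻¹ (1 + t²λ)^{-l}`. For `n ≠ 0` the
argument `(θ - 2πn) t` has modulus at least `|n| t`, so the decay of `φ` makes the remaining terms
sum to `O(t^{-2l-1}) = O(t⁻¹ (1 + t²λ)^{-l})` uniformly in `λ ∈ [0, 4]`. The limit follows from the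
case `l = 0` applied to `λ / t²`.
-/

open Set Topology
open scoped SchwartzMap

section ArccosOneSubHalf

variable {lam : ℝ}

lemma two_mul_sin_half_arccos_one_sub_half (h0 : 0 ≤ lam) (h4 : lam ≤ 4) :
    2 * sin (arccos (1 - lam / 2) / 2) = √lam := by
  rw [sin_half_eq_sqrt (arccos_nonneg _) ((arccos_le_pi _).trans (by linarith [pi_pos])),
    cos_arccos (by linarith) (by linarith), show (1 - (1 - lam / 2)) / 2 = lam / 2 ^ 2 by ring,
    sqrt_div' _ (by positivity), sqrt_sq zero_le_two]
  ring

lemma sqrt_le_arccos_one_sub_half (h0 : 0 ≤ lam) (h4 : lam ≤ 4) :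
    √lam ≤ arccos (1 - lam / 2) := by
  rw [← two_mul_sin_half_arccos_one_sub_half h0 h4]
  linarith [sin_le (div_nonneg (arccos_nonneg (1 - lam / 2)) zero_le_two)]

lemma arccos_one_sub_half_sub_sqrt_le (h0 : 0 ≤ lam) (h4 : lam ≤ 4) :
    arccos (1 - lam / 2) - √lam ≤ π ^ 3 / 96 * lam := by
  set θ := arccos (1 - lam / 2)
  have hθ0 : 0 ≤ θ := arccos_nonneg _
  have hθπ : θ ≤ π := arccos_le_pi _
  have hsin : 2 * sin (θ / 2) = √lam := two_mul_sin_half_arccos_one_sub_half h0 h4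
  have hcubic : θ - √lam ≤ θ ^ 3 / 24 := by
    rw [← hsin]; linarith [sin_ge_sub_cube (div_nonneg hθ0 zero_le_two)]
  -- Jordan's inequality `2x/π ≤ sin x` on `[0, π/2]` makes `θ` comparable to `√λ`.
  have hjordan : θ ≤ π / 2 * √lam := by
    have := mul_le_sin (x := θ / 2) (div_nonneg hθ0 zero_le_two) (by linarith)
    rw [show 2 / π * (θ / 2) = θ / π by ring, div_le_iff₀' pi_pos] at this
    rw [← hsin]
    linarith
  have hsq : θ ^ 2 ≤ π ^ 2 / 4 * lam := by
    have := pow_le_pow_left₀ hθ0 hjordan 2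
    rwa [mul_pow, sq_sqrt h0, div_pow, show (2 : ℝ) ^ 2 = 4 by norm_num] at this
  nlinarith [mul_le_mul hθπ hsq (sq_nonneg θ) pi_pos.le]

end ArccosOneSubHalf

lemma mul_inv_one_add_sqrt_mul_pow_le {t lam : ℝ} (ht : 0 < t) (hlam : 0 ≤ lam) (l : ℕ) :
    lam * t * ((1 + √lam * t) ^ (2 * l + 2))⁻¹ ≤ t⁻¹ * ((1 + t ^ 2 * lam) ^ l)⁻¹ := by
  set A := √lam * t
  have hA0 : 0 ≤ A := by positivity
  have hA2 : t ^ 2 * lam = A ^ 2 := by rw [mul_pow, sq_sqrt hlam]; ring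
  have hpow : A ^ 2 * (1 + A ^ 2) ^ l ≤ (1 + A) ^ (2 * l + 2) := by
    rw [pow_add, pow_mul, mul_comm]
    gcongr <;> nlinarith
  rw [hA2, show lam * t = t⁻¹ * A ^ 2 by field_simp; rw [← hA2]; ring, mul_assoc]
  gcongr t⁻¹ * ?_
  rw [← div_eq_mul_inv, ← one_div, div_le_div_iff₀ (by positivity) (by positivity), one_mul]
  exact hpow

lemma inv_pow_le_mul_inv_one_add_pow {t lam : ℝ} (ht : 1 ≤ t) (h0 : 0 ≤ lam) (h4 : lam ≤ 4)
    (l : ℕ) : (t ^ (2 * l + 1))⁻¹ ≤ 5 ^ l * t⁻¹ * ((1 + t ^ 2 * lam) ^ l)⁻¹ := by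
  have ht0 : 0 < t := one_pos.trans_le ht
  have hbase : 1 + t ^ 2 * lam ≤ 5 * t ^ 2 := by nlinarith [one_le_pow₀ (n := 2) ht]
  calc (t ^ (2 * l + 1))⁻¹ = ((5 * t ^ 2) ^ l)⁻¹ * 5 ^ l * t⁻¹ := by
        rw [mul_pow, ← pow_mul, pow_succ]; field_simp
    _ ≤ ((1 + t ^ 2 * lam) ^ l)⁻¹ * 5 ^ l * t⁻¹ := by gcongr
    _ = 5 ^ l * t⁻¹ * ((1 + t ^ 2 * lam) ^ l)⁻¹ := by ring

lemma abs_intCast_le_abs_sub_two_pi_mul {θ : ℝ} (hθ : |θ| ≤ π) {n : ℤ} (hn : n ≠ 0) :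
    |(n : ℝ)| ≤ |θ - 2 * π * n| := by
  have hn1 : (1 : ℝ) ≤ |(n : ℝ)| := by exact_mod_cast Int.one_le_abs hn
  have := abs_sub_abs_le_abs_sub (2 * π * n) θ
  rw [abs_sub_comm, abs_mul, abs_of_pos two_pi_pos] at this
  nlinarith [pi_gt_three]

lemma norm_comp_sub_two_pi_mul_le_of_decay {F : Type*} [NormedAddCommGroup F] {f : ℝ → F}
    {k : ℕ} {C : ℝ} (hC0 : 0 ≤ C) (hC : ∀ x, ‖f x‖ ≤ C * ((1 + ‖x‖) ^ (k + 2))⁻¹)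
    {t θ : ℝ} (ht : 1 ≤ t) (hθ : |θ| ≤ π) {n : ℤ} (hn : n ≠ 0) :
    ‖f ((θ - 2 * π * n) * t)‖ ≤ C * (t ^ k)⁻¹ * ((n : ℝ) ^ 2)⁻¹ := by
  have hn1 : (1 : ℝ) ≤ |(n : ℝ)| := by exact_mod_cast Int.one_le_abs hn
  have ht0 : 0 < t := one_pos.trans_le ht
  have hlow : (n : ℝ) ^ 2 * t ^ k ≤ (1 + ‖(θ - 2 * π * n) * t‖) ^ (k + 2) :=
    calc (n : ℝ) ^ 2 * t ^ k ≤ |(n : ℝ)| ^ (k + 2) * t ^ (k + 2) := by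
          rw [← sq_abs]
          exact mul_le_mul (pow_le_pow_right₀ hn1 (by omega)) (pow_le_pow_right₀ ht (by omega))
            (by positivity) (by positivity)
      _ = (|(n : ℝ)| * t) ^ (k + 2) := (mul_pow _ _ _).symm
      _ ≤ (1 + ‖(θ - 2 * π * n) * t‖) ^ (k + 2) := by
          rw [norm_mul, Real.norm_eq_abs, Real.norm_of_nonneg ht0.le]
          gcongr
          linarith [mul_le_mul_of_nonneg_right (abs_intCast_le_abs_sub_two_pi_mul hθ hn) ht0.le]
  have hn0 : (0 : ℝ) < (n : ℝ) ^ 2 := by positivity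
  calc ‖f ((θ - 2 * π * n) * t)‖ ≤ C * ((1 + ‖(θ - 2 * π * n) * t‖) ^ (k + 2))⁻¹ := hC _
    _ ≤ C * ((n : ℝ) ^ 2 * t ^ k)⁻¹ := by gcongr
    _ = C * (t ^ k)⁻¹ * ((n : ℝ) ^ 2)⁻¹ := by rw [mul_inv]; ring

namespace SchwartzMap

variable {F : Type*} [NormedAddCommGroup F] [NormedSpace ℝ F]

lemma exists_norm_le_mul_inv_one_add_norm_pow {E : Type*} [NormedAddCommGroup E]
    [NormedSpace ℝ E] (f : 𝓢(E, F)) (k : ℕ) :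
    ∃ C, 0 ≤ C ∧ ∀ x, ‖f x‖ ≤ C * ((1 + ‖x‖) ^ k)⁻¹ := by
  refine ⟨2 ^ k * (Finset.Iic (k, 0)).sup (fun m => SchwartzMap.seminorm ℝ m.1 m.2) f,
    by positivity, fun x => ?_⟩
  have h := one_add_le_sup_seminorm_apply (𝕜 := ℝ) (m := (k, 0)) le_rfl le_rfl f x
  rw [norm_iteratedFDeriv_zero] at h
  rwa [← div_eq_mul_inv, le_div_iff₀' (by positivity)]

lemma exists_norm_sub_le_of_le (f : 𝓢(ℝ, F)) (k : ℕ) :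
    ∃ C, 0 ≤ C ∧ ∀ a b : ℝ, 0 ≤ a → a ≤ b →
      ‖f b - f a‖ ≤ C * ((1 + a) ^ k)⁻¹ * (b - a) := by
  obtain ⟨C, hC0, hC⟩ := exists_norm_le_mul_inv_one_add_norm_pow (derivCLM ℝ F f) k
  refine ⟨C, hC0, fun a b ha hab => ?_⟩
  have hderiv : ∀ x ∈ Icc a b, ‖deriv f x‖ ≤ C * ((1 + a) ^ k)⁻¹ := fun x hx => by
    rw [← derivCLM_apply ℝ]
    refine (hC x).trans ?_
    rw [Real.norm_of_nonneg (ha.trans hx.1)]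
    gcongr
    exact hx.1
  simpa [Real.norm_of_nonneg (sub_nonneg.2 hab)] using
    (convex_Icc a b).norm_image_sub_le_of_norm_deriv_le (fun x _ => f.differentiableAt)
      hderiv (left_mem_Icc.2 hab) (right_mem_Icc.2 hab)

lemma exists_norm_tsum_comp_sub_two_pi_mul_sub_le [CompleteSpace F] (f : 𝓢(ℝ, F)) (k : ℕ) :
    ∃ C, 0 ≤ C ∧ ∀ t : ℝ, 1 ≤ t → ∀ θ : ℝ, |θ| ≤ π →
      ‖∑' n : ℤ, f ((θ - 2 * π * n) * t) - f (θ * t)‖ ≤ C * (t ^ k)⁻¹ := by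
  obtain ⟨C, hC0, hC⟩ := exists_norm_le_mul_inv_one_add_norm_pow f (k + 2)
  have hS : Summable (fun n : ℤ => ((n : ℝ) ^ 2)⁻¹) := by
    simpa [one_div] using summable_one_div_int_pow.2 one_lt_two
  refine ⟨C * ∑' n : ℤ, ((n : ℝ) ^ 2)⁻¹, by positivity, fun t ht θ hθ => ?_⟩
  have hterm : ∀ n : ℤ, n ≠ 0 →
      ‖f ((θ - 2 * π * n) * t)‖ ≤ C * (t ^ k)⁻¹ * ((n : ℝ) ^ 2)⁻¹ :=
    fun n hn => norm_comp_sub_two_pi_mul_le_of_decay hC0 hC ht hθ hn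
  have hsum : Summable (fun n : ℤ => f ((θ - 2 * π * n) * t)) :=
    .of_norm_bounded_eventually (hS.mul_left _)
      ((finite_singleton 0).eventually_cofinite_notMem.mono hterm)
  rw [hsum.tsum_eq_add_tsum_ite 0, Int.cast_zero, mul_zero, sub_zero, add_sub_cancel_left,
    mul_right_comm, ← tsum_mul_left]
  refine tsum_of_norm_bounded (hS.mul_left _).hasSum fun n => ?_
  split_ifs with hn
  · simp [hn]
  · exact hterm n hn

end SchwartzMap

theorem exists_abs_tsum_arccos_sub_le (φ : 𝓢(ℝ, ℝ)) (l : ℕ) :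
    ∃ C : ℝ, 0 < C ∧ ∀ t : ℝ, 1 ≤ t → ∀ lam ∈ Icc (0 : ℝ) 4,
      |(∑' n : ℤ, φ ((arccos (1 - lam / 2) - 2 * π * n) * t)) - φ (√lam * t)|
        ≤ C * t⁻¹ * ((1 + t ^ 2 * lam) ^ l)⁻¹ := by
  obtain ⟨C₁, hC₁0, hC₁⟩ := φ.exists_norm_tsum_comp_sub_two_pi_mul_sub_le (2 * l + 1)
  obtain ⟨C₂, hC₂0, hC₂⟩ := φ.exists_norm_sub_le_of_le (2 * l + 2)
  refine ⟨5 ^ l * C₁ + π ^ 3 / 96 * C₂ + 1, by positivity, fun t ht lam ⟨h0, h4⟩ => ?_⟩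
  have ht0 : 0 < t := one_pos.trans_le ht
  set θ := arccos (1 - lam / 2)
  have hθ : |θ| ≤ π := abs_le.2 ⟨by linarith [arccos_nonneg (1 - lam / 2), pi_pos], arccos_le_pi _⟩
  have htail := hC₁ t ht θ hθ
  have hmain := hC₂ (√lam * t) (θ * t) (by positivity)
    (mul_le_mul_of_nonneg_right (sqrt_le_arccos_one_sub_half h0 h4) ht0.le)
  have hgap : θ * t - √lam * t ≤ π ^ 3 / 96 * lam * t := by
    rw [← sub_mul]; exact mul_le_mul_of_nonneg_right (arccos_one_sub_half_sub_sqrt_le h0 h4) ht0.le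
  rw [Real.norm_eq_abs] at htail hmain
  have hw : 0 ≤ t⁻¹ * ((1 + t ^ 2 * lam) ^ l)⁻¹ := by positivity
  calc _ ≤ |∑' n : ℤ, φ ((θ - 2 * π * n) * t) - φ (θ * t)| + |φ (θ * t) - φ (√lam * t)| :=
        abs_sub_le _ _ _
    _ ≤ C₁ * (t ^ (2 * l + 1))⁻¹
          + π ^ 3 / 96 * C₂ * (lam * t * ((1 + √lam * t) ^ (2 * l + 2))⁻¹) := by
        gcongr
        calc _ ≤ _ := hmain
          _ ≤ C₂ * ((1 + √lam * t) ^ (2 * l + 2))⁻¹ * (π ^ 3 / 96 * lam * t) := by gcongr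
          _ = _ := by ring
    _ ≤ C₁ * (5 ^ l * t⁻¹ * ((1 + t ^ 2 * lam) ^ l)⁻¹)
          + π ^ 3 / 96 * C₂ * (t⁻¹ * ((1 + t ^ 2 * lam) ^ l)⁻¹) := by
        gcongr C₁ * ?_ + π ^ 3 / 96 * C₂ * ?_
        · exact inv_pow_le_mul_inv_one_add_pow ht h0 h4 l
        · exact mul_inv_one_add_sqrt_mul_pow_le ht0 h0 l
    _ ≤ _ := by linarith

theorem tendsto_tsum_arccos_div_sq (φ : 𝓢(ℝ, ℝ)) {lam : ℝ} (hlam : 0 ≤ lam) :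
    Tendsto (fun t : ℝ => ∑' n : ℤ, φ ((arccos (1 - (lam / t ^ 2) / 2) - 2 * π * n) * t))
      atTop (𝓝 (φ √lam)) := by
  obtain ⟨C, -, hC⟩ := exists_abs_tsum_arccos_sub_le φ 0
  have hclose : ∀ᶠ t : ℝ in atTop,
      ‖∑' n : ℤ, φ ((arccos (1 - (lam / t ^ 2) / 2) - 2 * π * n) * t) - φ √lam‖ ≤ C * t⁻¹ := by
    filter_upwards [eventually_ge_atTop (1 + √lam)] with t ht
    have ht1 : 1 ≤ t := by linarith [sqrt_nonneg lam]
    have ht0 : 0 < t := one_pos.trans_le ht1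
    have hsqrt : √(lam / t ^ 2) * t = √lam := by
      rw [sqrt_div' _ (by positivity), sqrt_sq ht0.le, div_mul_cancel₀ _ ht0.ne']
    have hmem : lam / t ^ 2 ∈ Icc (0 : ℝ) 4 := by
      refine ⟨by positivity, ?_⟩
      rw [div_le_iff₀ (by positivity)]
      nlinarith [sq_sqrt hlam, sqrt_nonneg lam]
    simpa [hsqrt] using hC t ht1 _ hmem
  have hlim : Tendsto (fun t : ℝ => C * t⁻¹) atTop (𝓝 0) := by
    simpa using tendsto_inv_atTop_zero.const_mul C
  simpa using (squeeze_zero_norm' hclose hlim).add_const (φ √lam)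

theorem stmt4_general (φ : SchwartzMap ℝ ℝ) :
    (∀ l : ℕ, ∃ C : ℝ, 0 < C ∧ ∀ t : ℝ, 1 ≤ t → ∀ lam ∈ Set.Icc (0 : ℝ) 4,
      |(∑' n : ℤ, φ ((Real.arccos (1 - lam / 2) - 2 * Real.pi * n) * t))
          - φ (Real.sqrt lam * t)|
        ≤ C * t⁻¹ * ((1 + t ^ 2 * lam) ^ l)⁻¹) ∧
    (∀ lam : ℝ, 0 ≤ lam →
      Tendsto (fun t : ℝ =>
          ∑' n : ℤ, φ ((Real.arccos (1 - (lam / t ^ 2) / 2) - 2 * Real.pi * n) * t))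
        atTop (nhds (φ (Real.sqrt lam)))) :=
  ⟨exists_abs_tsum_arccos_sub_le φ, fun _ hlam => tendsto_tsum_arccos_div_sq φ hlam⟩

theorem stmt4 (φ : SchwartzMap ℝ ℝ) (hφ_even : ∀ x : ℝ, φ (-x) = φ x)
    (hφ_nonneg : ∀ x : ℝ, 0 ≤ φ x)
    (hhat_supp : ∀ k : ℝ, k ∉ Set.Icc (-1 : ℝ) 1 → fourierHat (fun x => φ x) k = 0) :
    (∀ l : ℕ, ∃ C : ℝ, 0 < C ∧ ∀ t : ℝ, 1 ≤ t → ∀ lam ∈ Set.Icc (0 : ℝ) 4,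
      |(∑' n : ℤ, φ ((Real.arccos (1 - lam / 2) - 2 * Real.pi * n) * t))
          - φ (Real.sqrt lam * t)|
        ≤ C * t⁻¹ * ((1 + t ^ 2 * lam) ^ l)⁻¹) ∧
    (∀ lam : ℝ, 0 ≤ lam →
      Tendsto (fun t : ℝ =>
          ∑' n : ℤ, φ ((Real.arccos (1 - (lam / t ^ 2) / 2) - 2 * Real.pi * n) * t))
        atTop (nhds (φ (Real.sqrt lam)))) :=
  stmt4_general φ
end

section
/- For every x ∈ ℝ with x ∉ 2πℤ, Σ_{n∈ℤ} (x − 2πn)^{−2} = (1/4)·sin^{−2}(x/2), the series converging absolutely. -/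
/-!
Parseval's identity for `t ↦ exp (2πiat)` on `[0, 1]`: its `n`-th Fourier coefficient is
`(exp (2πi(a - n)) - 1) / (2πi(a - n))`, of squared modulus `sin² (πa) / (π² (a - n)²)`, while the
function has unit modulus. Hence `∑ₙ (a - n)⁻² = π² / sin² (πa)`, and `a = x / 2π` gives the claim.
-/

open Real

section
open Complex

lemma fourierCoeffOn_exp_mul (a : ℝ) {n : ℤ} (ha : a ≠ n) :
    fourierCoeffOn zero_lt_one (fun t : ℝ => exp (2 * π * I * a * t)) n =
      (exp (2 * π * I * (a - n)) - 1) / (2 * π * I * (a - n)) := by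
  have hc : 2 * π * I * (a - n) ≠ 0 := by
    have : (a : ℂ) - n ≠ 0 := sub_ne_zero.mpr (mod_cast ha)
    simp [this, Real.pi_ne_zero, I_ne_zero]
  rw [fourierCoeffOn_eq_integral]
  simp_rw [fourier_coe_apply, smul_eq_mul, ← Complex.exp_add]
  have : ∀ t : ℝ, 2 * π * I * ↑(-n) * t / ↑(1 - 0 : ℝ) + 2 * π * I * a * t =
      2 * π * I * (a - n) * t := fun t => by push_cast; ring
  simp_rw [this, integral_exp_mul_complex hc]
  simp

lemma sq_norm_fourierCoeffOn_exp_mul (a : ℝ) {n : ℤ} (ha : a ≠ n) :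
    ‖fourierCoeffOn zero_lt_one (fun t : ℝ => exp (2 * π * I * a * t)) n‖ ^ 2 =
      Real.sin (π * a) ^ 2 / π ^ 2 * ((a - n) ^ 2)⁻¹ := by
  have hsign : ((-1 : ℝ) ^ n) ^ 2 = 1 := by
    rw [← zpow_natCast, ← zpow_mul, mul_comm, zpow_mul]
    norm_num
  have hexp : 2 * π * I * (a - n) = I * ((2 * π * (a - n) : ℝ) : ℂ) := by push_cast; ring
  rw [fourierCoeffOn_exp_mul a ha, norm_div, hexp, norm_exp_I_mul_ofReal_sub_one,
    show 2 * π * (a - n) / 2 = π * a - n * π by ring, Real.sin_sub_int_mul_pi]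
  simp only [norm_mul, norm_I, Complex.norm_real, Real.norm_eq_abs, one_mul, div_pow, mul_pow,
    sq_abs, hsign]
  field_simp

theorem hasSum_inv_sq_sub_int {a : ℝ} (ha : ∀ n : ℤ, a ≠ n) :
    HasSum (fun n : ℤ => ((a - n) ^ 2)⁻¹) (π ^ 2 / Real.sin (π * a) ^ 2) := by
  have hsin : Real.sin (π * a) ≠ 0 := by
    rw [Ne, Real.sin_eq_zero_iff]
    rintro ⟨n, hn⟩
    exact ha n (by field_simp at hn; linarith)
  have hc : Real.sin (π * a) ^ 2 / π ^ 2 ≠ 0 := by positivity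
  have hunit : ∀ t : ℝ, ‖exp (2 * π * I * a * t)‖ = 1 := fun t => by simp [Complex.norm_exp]
  have hL2 : MeasureTheory.MemLp (fun t : ℝ => exp (2 * π * I * a * t)) 2
      (MeasureTheory.volume.restrict (Set.Ioc 0 1)) :=
    .of_bound (by fun_prop) 1 (.of_forall fun t => (hunit t).le)
  have hparseval := hasSum_sq_fourierCoeffOn zero_lt_one hL2
  have hnorm : ∫ t in (0 : ℝ)..1, ‖exp (2 * π * I * a * t)‖ ^ 2 = 1 := by simp [hunit]
  simp only [hnorm, sq_norm_fourierCoeffOn_exp_mul a (ha _)] at hparseval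
  rw [← hasSum_mul_left_iff hc, ← inv_div (Real.sin (π * a) ^ 2), mul_inv_cancel₀ hc]
  simpa using hparseval

end

theorem stmt10 (x : ℝ) (hx : ∀ n : ℤ, x ≠ 2 * Real.pi * n) :
    Summable (fun n : ℤ => ((x - 2 * Real.pi * n) ^ 2)⁻¹) ∧
    ∑' n : ℤ, ((x - 2 * Real.pi * n) ^ 2)⁻¹ = (1 / 4) * (Real.sin (x / 2) ^ 2)⁻¹ := by
  have ha : ∀ n : ℤ, x / (2 * π) ≠ n := fun n h => hx n (by field_simp at h; linarith)
  have hterm : ∀ n : ℤ, ((x - 2 * π * n) ^ 2)⁻¹ = (4 * π ^ 2)⁻¹ * ((x / (2 * π) - n) ^ 2)⁻¹ :=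
    fun n => by field_simp; ring
  have hvalue : (1 / 4) * (Real.sin (x / 2) ^ 2)⁻¹ =
      (4 * π ^ 2)⁻¹ * (π ^ 2 / Real.sin (π * (x / (2 * π))) ^ 2) := by
    rw [show π * (x / (2 * π)) = x / 2 by field_simp]
    field_simp
  have key := (hasSum_inv_sq_sub_int ha).mul_left (4 * π ^ 2)⁻¹
  simp only [← hterm, ← hvalue] at key
  exact ⟨key.summable, key.tsum_eq⟩
end

section
/- For every integer l ≥ 3 there is a constant C_l > 0 such that for all t ≥ 1 and all x ∈ [0, π], Σ_{n∈ℤ, n≠0} (1 + |x − 2πn|·t)^{−l} ≤ C_l · (1 + x t)^{−l/2} · t^{−l/2}. -/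
open Real

/-!
Since `|x| ≤ π`, the point `x` stays at distance at least `π |n|` from `2πn`, so for `n ≠ 0`
the `n`-th term is at most `(π t)^{-l} n^{-2}` and the whole sum is `O(t^{-l})`. The stated bound
follows by splitting `t^{-l} = t^{-l/2} t^{-l/2}` and using `1 + x t ≤ (1 + π) t` on one factor.
-/

theorem pi_mul_abs_le_abs_sub_two_pi_mul {x : ℝ} (hx : |x| ≤ π) (n : ℤ) :
    π * |(n : ℝ)| ≤ |x - 2 * π * n| := by
  rcases eq_or_ne n 0 with rfl | hn
  · simp
  have hn1 : (1 : ℝ) ≤ |(n : ℝ)| := by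
    rw [← Int.cast_abs]; exact_mod_cast Int.one_le_abs hn
  have h2πn : |2 * π * (n : ℝ)| = 2 * π * |(n : ℝ)| := by
    rw [abs_mul, abs_of_pos (by positivity : (0 : ℝ) < 2 * π)]
  have := abs_sub_abs_le_abs_sub (2 * π * (n : ℝ)) x
  rw [abs_sub_comm, h2πn] at this
  nlinarith [pi_pos]

theorem inv_one_add_abs_sub_two_pi_mul_pow_le {l : ℕ} (hl : 2 ≤ l) {x t : ℝ} (hx : |x| ≤ π)
    (ht : 0 < t) {n : ℤ} (hn : n ≠ 0) :
    ((1 + |x - 2 * π * n| * t) ^ l)⁻¹ ≤ ((π * t) ^ l)⁻¹ * (1 / (n : ℝ) ^ 2) := by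
  have hn1 : (1 : ℝ) ≤ |(n : ℝ)| := by
    rw [← Int.cast_abs]; exact_mod_cast Int.one_le_abs hn
  have hkey : (π * t) ^ l * (n : ℝ) ^ 2 ≤ (1 + |x - 2 * π * n| * t) ^ l :=
    calc (π * t) ^ l * (n : ℝ) ^ 2 = (π * t) ^ l * |(n : ℝ)| ^ 2 := by rw [sq_abs]
      _ ≤ (π * t) ^ l * |(n : ℝ)| ^ l := by gcongr
      _ = (π * |(n : ℝ)| * t) ^ l := by ring
      _ ≤ (1 + |x - 2 * π * n| * t) ^ l := by
        gcongr
        nlinarith [pi_mul_abs_le_abs_sub_two_pi_mul hx n]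
  calc ((1 + |x - 2 * π * n| * t) ^ l)⁻¹ ≤ ((π * t) ^ l * (n : ℝ) ^ 2)⁻¹ :=
        inv_anti₀ (by positivity) hkey
    _ = ((π * t) ^ l)⁻¹ * (1 / (n : ℝ) ^ 2) := by rw [mul_inv, one_div]

theorem tsum_inv_one_add_abs_sub_two_pi_mul_pow_le {l : ℕ} (hl : 2 ≤ l) {x t : ℝ} (hx : |x| ≤ π)
    (ht : 0 < t) :
    ∑' n : {n : ℤ // n ≠ 0}, ((1 + |x - 2 * π * (n : ℤ)| * t) ^ l)⁻¹
      ≤ ((π * t) ^ l)⁻¹ * ∑' n : ℤ, 1 / (n : ℝ) ^ 2 := by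
  have hsum : Summable (fun n : ℤ => ((π * t) ^ l)⁻¹ * (1 / (n : ℝ) ^ 2)) :=
    (Real.summable_one_div_int_pow.mpr one_lt_two).mul_left _
  have hbound (n : {n : ℤ // n ≠ 0}) := inv_one_add_abs_sub_two_pi_mul_pow_le hl hx ht n.2
  rw [← tsum_mul_left]
  exact Summable.tsum_le_tsum_of_inj Subtype.val Subtype.val_injective (fun _ _ => by positivity)
    hbound (.of_nonneg_of_le (fun _ => by positivity) hbound (hsum.subtype _)) hsum

theorem rpow_neg_le_mul_rpow_neg {A K t p : ℝ} (hA : 0 < A) (hAK : A ≤ K * t) (ht : 0 < t)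
    (hp : 0 ≤ p) : t ^ (-p) ≤ K ^ p * A ^ (-p) := by
  have hK : 0 < K := pos_of_mul_pos_left (hA.trans_le hAK) ht.le
  calc t ^ (-p) = K ^ p * (K ^ (-p) * t ^ (-p)) := by
        rw [← mul_assoc, ← rpow_add hK, add_neg_cancel, rpow_zero, one_mul]
    _ = K ^ p * (K * t) ^ (-p) := by rw [mul_rpow hK.le ht.le]
    _ ≤ K ^ p * A ^ (-p) :=
        mul_le_mul_of_nonneg_left (rpow_le_rpow_of_nonpos hA hAK (neg_nonpos.mpr hp)) (by positivity)

theorem stmt15 : ∀ l : ℕ, 3 ≤ l → ∃ C : ℝ, 0 < C ∧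
    ∀ t : ℝ, 1 ≤ t → ∀ x ∈ Set.Icc (0 : ℝ) Real.pi,
      ∑' n : {n : ℤ // n ≠ 0}, ((1 + |x - 2 * Real.pi * (n : ℤ)| * t) ^ l)⁻¹
        ≤ C * (1 + x * t) ^ (-(l : ℝ) / 2) * t ^ (-(l : ℝ) / 2) := by
  intro l hl
  set S := ∑' n : ℤ, 1 / (n : ℝ) ^ 2
  have hS : 0 < S := (Real.summable_one_div_int_pow.mpr one_lt_two).tsum_pos
    (fun _ => by positivity) 1 (by norm_num)
  refine ⟨(1 + π) ^ ((l : ℝ) / 2) * ((π ^ l)⁻¹ * S), by positivity, fun t ht x ⟨hx0, hxπ⟩ => ?_⟩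
  have ht0 : 0 < t := one_pos.trans_le ht
  have hsplit : (t ^ l)⁻¹ = t ^ (-(l : ℝ) / 2) * t ^ (-(l : ℝ) / 2) := by
    rw [← rpow_add ht0, neg_div, ← neg_add, add_halves, rpow_neg ht0.le, rpow_natCast]
  have hcompare : t ^ (-(l : ℝ) / 2) ≤ (1 + π) ^ ((l : ℝ) / 2) * (1 + x * t) ^ (-(l : ℝ) / 2) := by
    rw [neg_div]
    exact rpow_neg_le_mul_rpow_neg (by positivity) (by nlinarith) ht0 (by positivity)
  calc _ ≤ ((π * t) ^ l)⁻¹ * S :=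
        tsum_inv_one_add_abs_sub_two_pi_mul_pow_le (by omega) (abs_le.mpr ⟨by linarith, hxπ⟩) ht0
    _ = (π ^ l)⁻¹ * S * t ^ (-(l : ℝ) / 2) * t ^ (-(l : ℝ) / 2) := by
        rw [mul_pow, mul_inv, hsplit]; ring
    _ ≤ (π ^ l)⁻¹ * S * ((1 + π) ^ ((l : ℝ) / 2) * (1 + x * t) ^ (-(l : ℝ) / 2))
          * t ^ (-(l : ℝ) / 2) := by gcongr
    _ = _ := by ring
end

section
/- Let φ : ℝ → ℝ be differentiable with rapidly decaying derivative, meaning that for every integer p ≥ 0 there is A_p > 0 with |φ'(y)| ≤ A_p (1 + |y|)^{−p} for all y ∈ ℝ. Then for every integer l ≥ 0 there is a constant C_l > 0 such that for all t ≥ 1 and all λ ∈ [0,4], |φ(t·arccos(1 − λ/2)) − φ(t·√λ)| ≤ C_l · t^{−1} · (1 + t²λ)^{−l}. -/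
open Real

private lemma aux_sub_sin (x : ℝ) (hx : 0 ≤ x) : x - Real.sin x ≤ x ^ 2 / 2 * x := by
  have hdiff : ∀ y ∈ Set.Icc (0:ℝ) x, DifferentiableAt ℝ (fun y => y - Real.sin y) y :=
    fun y _ => (differentiable_id.sub Real.differentiable_sin) y
  have hderiv : ∀ y : ℝ, deriv (fun y => y - Real.sin y) y = 1 - Real.cos y := by
    intro y
    have : HasDerivAt (fun y => y - Real.sin y) (1 - Real.cos y) y :=
      (hasDerivAt_id y).sub (Real.hasDerivAt_sin y)
    exact this.deriv
  have hbound : ∀ y ∈ Set.Icc (0:ℝ) x, ‖deriv (fun y => y - Real.sin y) y‖ ≤ x ^ 2 / 2 := by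
    intro y hy
    rw [hderiv, Real.norm_eq_abs, abs_of_nonneg (by linarith [Real.cos_le_one y])]
    have h1 : 1 - y ^ 2 / 2 ≤ Real.cos y := Real.one_sub_sq_div_two_le_cos
    have h2 : y ^ 2 ≤ x ^ 2 := by nlinarith [hy.1, hy.2]
    linarith
  have := Convex.norm_image_sub_le_of_norm_deriv_le (f := fun y => y - Real.sin y)
    (s := Set.Icc (0:ℝ) x) hdiff hbound (convex_Icc _ _)
    (Set.left_mem_Icc.2 hx) (Set.right_mem_Icc.2 hx)
  simp only [Real.sin_zero, sub_zero, Real.norm_eq_abs] at this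
  calc x - Real.sin x ≤ |x - Real.sin x| := le_abs_self _
    _ ≤ x ^ 2 / 2 * |x| := this
    _ = x ^ 2 / 2 * x := by rw [abs_of_nonneg hx]

set_option maxHeartbeats 1000000 in
theorem stmt16 (φ : ℝ → ℝ) (hφ_diff : Differentiable ℝ φ)
    (hφ_decay : ∀ p : ℕ, ∃ A : ℝ, 0 < A ∧ ∀ y : ℝ, |deriv φ y| ≤ A * ((1 + |y|) ^ p)⁻¹) :
    ∀ l : ℕ, ∃ C : ℝ, 0 < C ∧ ∀ t : ℝ, 1 ≤ t → ∀ lam ∈ Set.Icc (0 : ℝ) 4,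
      |φ (t * Real.arccos (1 - lam / 2)) - φ (t * Real.sqrt lam)|
        ≤ C * t⁻¹ * ((1 + t ^ 2 * lam) ^ l)⁻¹ := by
  intro l
  obtain ⟨A, hA, hAbound⟩ := hφ_decay (2 * (l + 1))
  refine ⟨A, hA, ?_⟩
  intro t ht lam hlam
  obtain ⟨hlam0, hlam4⟩ := hlam
  have ht0 : 0 < t := lt_of_lt_of_le one_pos ht
  set θ := Real.arccos (1 - lam / 2) with hθdef
  have hθ0 : 0 ≤ θ := Real.arccos_nonneg _
  have hθπ : θ ≤ π := Real.arccos_le_pi _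
  have hcos : Real.cos θ = 1 - lam / 2 :=
    Real.cos_arccos (by linarith) (by linarith)
  have hsin_nonneg : 0 ≤ Real.sin (θ / 2) :=
    Real.sin_nonneg_of_nonneg_of_le_pi (by linarith) (by linarith [Real.pi_pos])
  have hsin_sq : Real.sin (θ / 2) ^ 2 = lam / 4 := by
    have := Real.sin_sq_eq_half_sub (x := θ / 2)
    rw [show 2 * (θ / 2) = θ by ring, hcos] at this
    linarith
  have hs : Real.sqrt lam = 2 * Real.sin (θ / 2) := by
    have : lam = (2 * Real.sin (θ / 2)) ^ 2 := by nlinarith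
    rw [this, Real.sqrt_sq (by positivity)]
  have hsθ : Real.sqrt lam ≤ θ := by
    have := Real.sin_le (x := θ / 2) (by linarith)
    rw [hs]; linarith
  have hθs : θ ≤ π / 2 * Real.sqrt lam := by
    have := Real.mul_le_sin (x := θ / 2) (by linarith) (by linarith)
    rw [hs]
    have hπ : 0 < π := Real.pi_pos
    have h0 := mul_le_mul_of_nonneg_left this hπ.le
    rw [show π * (2 / π * (θ / 2)) = θ from by field_simp] at h0
    linarith
  have hkey : θ - Real.sqrt lam ≤ lam := by
    have h1 := aux_sub_sin (θ / 2) (by linarith)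
    have hθ2 : θ ^ 2 ≤ π ^ 2 / 4 * lam := by
      have hsq : θ ^ 2 ≤ (π / 2 * Real.sqrt lam) ^ 2 := by
        apply pow_le_pow_left₀ hθ0 hθs
      rw [mul_pow, Real.sq_sqrt hlam0] at hsq
      nlinarith
    have hπ : π < 3.15 := Real.pi_lt_d2
    have hπ0 : 3 < π := Real.pi_gt_three
    have hθ3 : θ ^ 3 ≤ π ^ 3 / 4 * lam := by
      nlinarith [mul_le_mul_of_nonneg_left hθ2 Real.pi_pos.le,
        mul_le_mul_of_nonneg_right hθπ (sq_nonneg θ)]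
    have hπ3 : π ^ 3 ≤ 32 := by nlinarith
    rw [hs]
    nlinarith [mul_nonneg (sub_nonneg.2 hπ3) hlam0]
  -- Mean value estimate
  clear_value θ
  set a := t * Real.sqrt lam with hadef
  set b := t * θ with hbdef
  have ha0 : 0 ≤ a := by positivity
  have hab : a ≤ b := by
    apply mul_le_mul_of_nonneg_left hsθ ht0.le
  clear_value a b
  set p := 2 * (l + 1) with hpdef
  clear_value p
  have hbd : ∀ x ∈ Set.Icc a b, ‖deriv φ x‖ ≤ A * ((1 + a) ^ p)⁻¹ := by
    intro x hx
    have hxa : a ≤ x := hx.1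
    have hx0 : 0 ≤ x := le_trans ha0 hxa
    refine le_trans (hAbound x) ?_
    apply mul_le_mul_of_nonneg_left _ hA.le
    apply inv_anti₀ (by positivity)
    apply pow_le_pow_left₀ (by linarith)
    rw [abs_of_nonneg hx0]; linarith
  have hmvt := Convex.norm_image_sub_le_of_norm_deriv_le (f := φ) (s := Set.Icc a b)
    (fun x _ => hφ_diff x) hbd (convex_Icc _ _)
    (Set.left_mem_Icc.2 hab) (Set.right_mem_Icc.2 hab)
  have habs : |b - a| = b - a := abs_of_nonneg (by linarith)
  rw [Real.norm_eq_abs, Real.norm_eq_abs, habs] at hmvt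
  set D := 1 + t ^ 2 * lam with hDdef
  clear_value D
  have hD1 : 1 ≤ D := by nlinarith
  have hD0 : 0 < D := by linarith
  have hstep1 : (((1 + a) ^ p)⁻¹ : ℝ) ≤ (D ^ (l + 1))⁻¹ := by
    apply inv_anti₀ (by positivity)
    have : D ≤ (1 + a) ^ 2 := by
      have : a ^ 2 = t ^ 2 * lam := by
        rw [hadef, mul_pow, Real.sq_sqrt hlam0]
      nlinarith
    calc D ^ (l + 1) ≤ ((1 + a) ^ 2) ^ (l + 1) := pow_le_pow_left₀ hD0.le this _
      _ = (1 + a) ^ p := by rw [← pow_mul, hpdef]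
  have hba : b - a ≤ t * lam := by
    rw [hbdef, hadef, ← mul_sub]
    exact mul_le_mul_of_nonneg_left hkey ht0.le
  calc |φ b - φ a| ≤ A * ((1 + a) ^ p)⁻¹ * (b - a) := hmvt
    _ ≤ A * (D ^ (l + 1))⁻¹ * (t * lam) := by
        apply mul_le_mul (mul_le_mul_of_nonneg_left hstep1 hA.le) hba (by linarith)
        positivity
    _ = (A * (D ^ l)⁻¹) * ((t * lam) / D) := by
        rw [pow_succ, mul_inv, div_eq_mul_inv]; ring
    _ ≤ (A * (D ^ l)⁻¹) * (1 / t) := by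
        apply mul_le_mul_of_nonneg_left _ (by positivity)
        rw [div_le_div_iff₀ hD0 ht0]
        nlinarith
    _ = A * t⁻¹ * (D ^ l)⁻¹ := by rw [one_div]; ring
end

section
/- Let γ > 0 and let φ : ℝ → ℝ be a Schwartz function. Then for all integers l ≥ 0 and m ≥ 0 there is a constant C_{l,m} > 0 such that for all λ > 0 and all t > 0, (1 + t^{2/γ} λ)^l · λ^m · |(d/dλ)^m [φ(λ^{γ/2} t)]| ≤ C_{l,m}. -/
/-!
With `a = γ / 2` and `s = λ ^ a * t`, induction on `m` and the chain rule give
`(d/dλ)^m φ(λ ^ a * t) = ∑_{k ≤ m} c_{m,k} λ ^ (a k - m) t ^ k φ^(k)(s)`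
with constants `c_{m,k}` independent of `λ` and `t`. Multiplying by `λ ^ m` turns the `k`-th
term into `c_{m,k} s ^ k φ^(k)(s)`, and `t ^ (2/γ) λ = s ^ (2/γ)`, so the whole expression is
at most `∑_k |c_{m,k}| sup_{s ≥ 0} (1 + s ^ (2/γ)) ^ l s ^ k |φ^(k)(s)|`, which is finite
since `φ` is Schwartz.
-/

open Real Finset
open scoped ContDiff SchwartzMap

/-- The coefficients `c_{m,k}`: differentiating the `k`-th term feeds `c_{m+1,k}` through the
power `λ ^ (a k - m)` and `c_{m+1,k+1}` through the argument of `φ^(k)`. -/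
def rpowCompCoeff (a : ℝ) : ℕ → ℕ → ℝ
  | 0, 0 => 1
  | 0, _ + 1 => 0
  | m + 1, 0 => -m * rpowCompCoeff a m 0
  | m + 1, k + 1 => (a * (k + 1) - m) * rpowCompCoeff a m (k + 1) + a * rpowCompCoeff a m k

theorem rpowCompCoeff_eq_zero_of_lt (a : ℝ) {m k : ℕ} (h : m < k) :
    rpowCompCoeff a m k = 0 := by
  induction m generalizing k with
  | zero => obtain ⟨k, rfl⟩ := Nat.exists_eq_add_one_of_ne_zero h.ne'; rfl
  | succ m ih =>
    obtain ⟨k, rfl⟩ := Nat.exists_eq_add_one_of_ne_zero (by omega : k ≠ 0)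
    simp [rpowCompCoeff, ih (by omega : m < k + 1), ih (by omega : m < k)]

theorem sum_rpowCompCoeff_smul {E : Type*} [AddCommGroup E] [Module ℝ E]
    (a : ℝ) (m : ℕ) (T : ℕ → E) :
    ∑ k ∈ range (m + 1), rpowCompCoeff a m k • ((a * k - m) • T k + a • T (k + 1)) =
      ∑ k ∈ range (m + 2), rpowCompCoeff a (m + 1) k • T k := by
  calc _ = ∑ k ∈ range (m + 2), rpowCompCoeff a m k • (a * k - m) • T k +
        ∑ k ∈ range (m + 1), rpowCompCoeff a m k • a • T (k + 1) := by
        rw [sum_range_succ _ (m + 1), rpowCompCoeff_eq_zero_of_lt a (Nat.lt_succ_self m),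
          zero_smul, add_zero, ← sum_add_distrib]
        simp only [smul_add]
    _ = _ := by
        rw [sum_range_succ' _ (m + 1), sum_range_succ' _ (m + 1), add_right_comm,
          ← sum_add_distrib]
        congr 1
        · refine sum_congr rfl fun k _ => ?_
          simp only [rpowCompCoeff, Nat.cast_add, Nat.cast_one]
          module
        · simp only [rpowCompCoeff, Nat.cast_zero]
          module

variable {E : Type*} [NormedAddCommGroup E] [NormedSpace ℝ E]

noncomputable def rpowCompTerm (f : ℝ → E) (a t : ℝ) (m k : ℕ) (u : ℝ) : E :=
  (u ^ (a * k - m) * t ^ k) • iteratedDeriv k f (u ^ a * t)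

theorem hasDerivAt_rpowCompTerm {f : ℝ → E} (hf : ContDiff ℝ ∞ f) (a t : ℝ) (m k : ℕ)
    {u : ℝ} (hu : 0 < u) :
    HasDerivAt (rpowCompTerm f a t m k)
      ((a * k - m) • rpowCompTerm f a t (m + 1) k u +
        a • rpowCompTerm f a t (m + 1) (k + 1) u) u := by
  have hD : HasDerivAt (iteratedDeriv k f) (iteratedDeriv (k + 1) f (u ^ a * t))
      (u ^ a * t) := by
    rw [iteratedDeriv_succ]
    exact (hf.differentiable_iteratedDeriv k
      (by exact_mod_cast WithTop.coe_lt_top _) _).hasDerivAt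
  have hinner := (hasDerivAt_rpow_const (p := a) (Or.inl hu.ne')).mul_const t
  have hcoeff := (hasDerivAt_rpow_const (p := a * k - m) (Or.inl hu.ne')).mul_const (t ^ k)
  refine (hcoeff.smul (hD.scomp u hinner)).congr_deriv ?_
  have hexp : u ^ (a * k - m) * u ^ (a - 1) = u ^ (a * ↑(k + 1) - ↑(m + 1)) := by
    rw [← rpow_add hu]; push_cast; ring_nf
  have hexp' : u ^ (a * k - m - 1) = u ^ (a * k - ↑(m + 1)) := by push_cast; ring_nf
  simp only [rpowCompTerm, smul_smul, ← hexp, hexp']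
  rw [add_comm, Function.comp_apply, pow_succ]
  congr 2 <;> ring

theorem iteratedDeriv_comp_rpow_mul {f : ℝ → E} (hf : ContDiff ℝ ∞ f) (a t : ℝ) (m : ℕ)
    {u : ℝ} (hu : 0 < u) :
    iteratedDeriv m (fun v => f (v ^ a * t)) u =
      ∑ k ∈ range (m + 1), rpowCompCoeff a m k • rpowCompTerm f a t m k u := by
  induction m generalizing u with
  | zero => simp [rpowCompCoeff, rpowCompTerm]
  | succ m ih =>
    have heq : iteratedDeriv m (fun v => f (v ^ a * t)) =ᶠ[nhds u]
        fun v => ∑ k ∈ range (m + 1), rpowCompCoeff a m k • rpowCompTerm f a t m k v :=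
      Filter.eventually_of_mem (Ioi_mem_nhds hu) fun v hv => ih hv
    have hsum := HasDerivAt.fun_sum (u := range (m + 1)) fun k _ =>
      (hasDerivAt_rpowCompTerm hf a t m k hu).const_smul (rpowCompCoeff a m k)
    rw [iteratedDeriv_succ, heq.deriv_eq]
    exact hsum.deriv.trans (sum_rpowCompCoeff_smul a m _)

theorem pow_smul_rpowCompTerm (f : ℝ → E) (a t : ℝ) (m k : ℕ) {u : ℝ} (hu : 0 < u) :
    u ^ m • rpowCompTerm f a t m k u = (u ^ a * t) ^ k • iteratedDeriv k f (u ^ a * t) := by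
  rw [rpowCompTerm, smul_smul, ← mul_assoc, ← rpow_natCast u m, ← rpow_add hu,
    add_sub_cancel, rpow_mul_natCast hu.le, mul_pow]

theorem one_add_rpow_le_two_mul_one_add_pow_ceil_s17 {s r : ℝ} (hs : 0 ≤ s) (hr : 0 ≤ r) :
    1 + s ^ r ≤ 2 * (1 + s) ^ ⌈r⌉₊ := by
  have h1s : 1 ≤ 1 + s := by linarith
  have hrpow : s ^ r ≤ (1 + s) ^ ⌈r⌉₊ :=
    calc s ^ r ≤ (1 + s) ^ r := rpow_le_rpow hs (by linarith) hr
      _ ≤ (1 + s) ^ (⌈r⌉₊ : ℝ) := rpow_le_rpow_of_exponent_le h1s (Nat.le_ceil r)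
      _ = (1 + s) ^ ⌈r⌉₊ := rpow_natCast _ _
  linarith [one_le_pow₀ (n := ⌈r⌉₊) h1s]

theorem SchwartzMap.exists_one_add_rpow_pow_mul_norm_le_s17 {F : Type*} [NormedAddCommGroup F]
    [NormedSpace ℝ F] (f : 𝓢(ℝ, F)) {r : ℝ} (hr : 0 ≤ r) (l k : ℕ) :
    ∃ C, ∀ s, 0 ≤ s → (1 + s ^ r) ^ l * ‖s ^ k • iteratedDeriv k f s‖ ≤ C := by
  set n := ⌈r⌉₊ * l + k
  refine ⟨2 ^ l * (2 ^ n * (Iic (n, k)).sup (fun m => SchwartzMap.seminorm ℝ m.1 m.2) f),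
    fun s hs => ?_⟩
  have hdecay := f.one_add_le_sup_seminorm_apply (𝕜 := ℝ) (m := (n, k)) le_rfl le_rfl s
  rw [norm_iteratedFDeriv_eq_norm_iteratedDeriv, Real.norm_eq_abs, abs_of_nonneg hs] at hdecay
  calc (1 + s ^ r) ^ l * ‖s ^ k • iteratedDeriv k f s‖
      ≤ (2 * (1 + s) ^ ⌈r⌉₊) ^ l * ((1 + s) ^ k * ‖iteratedDeriv k f s‖) := by
        rw [norm_smul, norm_pow, Real.norm_eq_abs, abs_of_nonneg hs]
        gcongr
        · exact one_add_rpow_le_two_mul_one_add_pow_ceil_s17 hs hr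
        · linarith
    _ = 2 ^ l * ((1 + s) ^ n * ‖iteratedDeriv k f s‖) := by ring
    _ ≤ _ := by gcongr

theorem stmt17 (γ : ℝ) (hγ : 0 < γ) (φ : SchwartzMap ℝ ℝ) :
    ∀ l m : ℕ, ∃ C : ℝ, 0 < C ∧ ∀ lam : ℝ, 0 < lam → ∀ t : ℝ, 0 < t →
      (1 + t ^ (2 / γ) * lam) ^ l * lam ^ m *
        |iteratedDeriv m (fun u : ℝ => φ (u ^ (γ / 2) * t)) lam| ≤ C := by
  intro l m
  choose C hC using fun k =>
    φ.exists_one_add_rpow_pow_mul_norm_le_s17 (r := 2 / γ) (by positivity) l k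
  set c := rpowCompCoeff (γ / 2) m
  refine ⟨max (∑ k ∈ range (m + 1), |c k| * C k) 1, by positivity,
    fun lam hlam t ht => le_max_of_le_left ?_⟩
  set s := lam ^ (γ / 2) * t with hs
  have hweight : t ^ (2 / γ) * lam = s ^ (2 / γ) := by
    rw [hs, mul_rpow (by positivity) ht.le, ← rpow_mul hlam.le,
      show γ / 2 * (2 / γ) = 1 by field_simp, rpow_one, mul_comm]
  rw [iteratedDeriv_comp_rpow_mul (φ.smooth ⊤) _ _ _ hlam, hweight]
  calc (1 + s ^ (2 / γ)) ^ l * lam ^ m *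
        |∑ k ∈ range (m + 1), c k • rpowCompTerm φ (γ / 2) t m k lam|
      = (1 + s ^ (2 / γ)) ^ l *
        ‖∑ k ∈ range (m + 1), c k • lam ^ m • rpowCompTerm φ (γ / 2) t m k lam‖ := by
        simp_rw [smul_comm (c _) (lam ^ m), ← smul_sum, norm_smul, Real.norm_eq_abs,
          abs_of_pos (pow_pos hlam m), mul_assoc]
    _ ≤ ∑ k ∈ range (m + 1), |c k| *
        ((1 + s ^ (2 / γ)) ^ l * ‖lam ^ m • rpowCompTerm φ (γ / 2) t m k lam‖) := by
        refine (mul_le_mul_of_nonneg_left (norm_sum_le _ _) (by positivity)).trans_eq ?_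
        rw [mul_sum]
        refine sum_congr rfl fun k _ => ?_
        rw [norm_smul, Real.norm_eq_abs]
        ring
    _ ≤ ∑ k ∈ range (m + 1), |c k| * C k := by
        gcongr with k
        rw [pow_smul_rpowCompTerm _ _ _ _ _ hlam]
        exact hC k s (by positivity)
end
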